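/- arXiv:1403.5428 — 9 statements merged into one kernel-verified Lean document; each statement's English description precedes it below -/
import Mathlib

section
/- (Theorem 3.1) Let f be semimultiplicative with f(x) ≠ 0 for all x ∈ P. Let T be a meet closed set of distinct elements of P, let x ∈ P \ T be such that no element of T is strictly above x, suppose S = T ∪ {x} is meet closed, and suppose Σ_{z ∈ S, z ≤ x} (1/f(z)) · μ_S(z, x) ≠ 0. Then the join matrix [S]_f is invertible if and only if the join matrix [T]_f is invertible. -/
/-!
Since `f` is semimultiplicative and nowhere zero, `f (a ⊔ b) = f a * (f (a ⊓ b))⁻¹ * f b`, so the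
join matrix of a meet closed set `S` is `D * [1 / f (a ⊓ b)] * D` with `D = diagonal f`. The meet
matrix of `g` on a finite meet semilattice factors as `Zᵀ * diagonal Ψ * Z`, where `Z` is the
(invertible) zeta matrix and `Ψ = g * μ` is the Möbius transform of `g`. Hence `[S]_f` is invertible
iff `Ψ_S (1 / f)` vanishes nowhere on `S`. Because no element of `T` lies strictly above `p`, `T`
is a lower set of `S = T ∪ {p}`, so `Ψ_S` and `Ψ_T` agree on `T`, and the only new value
`Ψ_S (1 / f) p` is the nonzero sum of the hypothesis.
-/

open scoped Classical

/-- The Möbius function of the finite subposet determined by a finite subset `S` of `P`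
(the inverse of the zeta function in the incidence algebra of `S`), extended by `0`
outside `S × S`. -/
noncomputable def mobiusS {P : Type*} [Lattice P] (S : Finset P) (a b : P) : ℂ :=
  letI : LocallyFiniteOrder ↥S := Fintype.toLocallyFiniteOrder
  if ha : a ∈ S then
    if hb : b ∈ S then IncidenceAlgebra.mu ℂ (⟨a, ha⟩ : ↥S) (⟨b, hb⟩ : ↥S) else 0
  else 0

open Finset Matrix

namespace IncidenceAlgebra

variable {R α β : Type*}

def toMatrix [Zero R] [LE α] (f : IncidenceAlgebra R α) : Matrix α α R :=
  Matrix.of fun a b => f a b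

section PartialOrder

variable [PartialOrder α]

lemma toMatrix_one [Semiring R] [DecidableEq α] : toMatrix (1 : IncidenceAlgebra R α) = 1 := by
  ext a b
  simp [toMatrix, Matrix.one_apply]

variable [Fintype α] [LocallyFiniteOrder α]

lemma toMatrix_mul [Semiring R] (f g : IncidenceAlgebra R α) :
    toMatrix (f * g) = toMatrix f * toMatrix g := by
  ext a b
  simp only [toMatrix, of_apply, mul_apply, Matrix.mul_apply]
  refine sum_subset (subset_univ _) fun x _ hx => ?_
  rw [mem_Icc, not_and_or] at hx
  rcases hx with hax | hxb
  · rw [apply_eq_zero_of_not_le hax, zero_mul]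
  · rw [apply_eq_zero_of_not_le hxb, mul_zero]

variable [DecidableEq α] [Ring R]

lemma toMatrix_mu_mul_toMatrix_zeta [DecidableLE α] :
    toMatrix (mu R) * toMatrix (zeta R : IncidenceAlgebra R α) = 1 := by
  rw [← toMatrix_mul, mu_mul_zeta, toMatrix_one]

/-- `moebiusTransform g x = ∑ z ≤ x, g z * μ(z, x)`, the function `Ψ` of the paper. -/
def moebiusTransform (g : α → R) : α → R := g ᵥ* toMatrix (mu R)

lemma moebiusTransform_vecMul_toMatrix_zeta [DecidableLE α] (g : α → R) :
    moebiusTransform g ᵥ* toMatrix (zeta R) = g := by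
  rw [moebiusTransform, vecMul_vecMul, toMatrix_mu_mul_toMatrix_zeta, vecMul_one]

end PartialOrder

section OrderEmbedding

variable [PartialOrder α] [PartialOrder β] [LocallyFiniteOrder α] [LocallyFiniteOrder β]
  [DecidableEq α] [DecidableEq β]

lemma mu_orderEmbedding_apply [AddCommGroup R] [One R] (φ : α ↪o β)
    (hφ : (Set.range φ).OrdConnected) (a b : α) : mu R (φ a) (φ b) = mu R a b := by
  induction hn : #(Ico a b) using Nat.strong_induction_on generalizing b with
  | _ n ih =>
  obtain rfl | hab := eq_or_ne a b
  · simp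
  rw [mu_eq_neg_sum_Ico_of_ne hab, mu_eq_neg_sum_Ico_of_ne (φ.injective.ne hab)]
  have himg : Ico (φ a) (φ b) = (Ico a b).map φ.toEmbedding := by
    ext y
    simp only [mem_Ico, mem_map, RelEmbedding.coe_toEmbedding]
    constructor
    · rintro ⟨hay, hyb⟩
      obtain ⟨x, rfl⟩ := hφ.out ⟨a, rfl⟩ ⟨b, rfl⟩ ⟨hay, hyb.le⟩
      exact ⟨x, ⟨φ.le_iff_le.1 hay, φ.lt_iff_lt.1 hyb⟩, rfl⟩
    · rintro ⟨x, ⟨hax, hxb⟩, rfl⟩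
      exact ⟨φ.monotone hax, φ.strictMono hxb⟩
  rw [himg, sum_map]
  refine congrArg _ (sum_congr rfl fun x hx => ih _ ?_ x rfl)
  rw [← hn]
  exact card_lt_card <| (ssubset_iff_of_subset (Ico_subset_Ico_right (mem_Ico.1 hx).2.le)).2
    ⟨x, hx, right_notMem_Ico⟩

lemma moebiusTransform_comp_of_isLowerSet [Ring R] [Fintype α] [Fintype β] (φ : α ↪o β)
    (hφ : IsLowerSet (Set.range φ)) (g : β → R) (x : α) :
    moebiusTransform (g ∘ φ) x = moebiusTransform g (φ x) := by
  simp only [moebiusTransform, vecMul, dotProduct, toMatrix, of_apply, Function.comp_apply]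
  refine Fintype.sum_of_injective φ φ.injective _ _ (fun w hw => ?_) fun z => ?_
  · rw [apply_eq_zero_of_not_le (fun hle => hw (hφ hle ⟨x, rfl⟩)), mul_zero]
  · rw [mu_orderEmbedding_apply φ hφ.ordConnected]

lemma forall_moebiusTransform_ne_zero_iff_of_isLowerSet [Ring R] [Fintype α] [Fintype β]
    (φ : α ↪o β) (hφ : IsLowerSet (Set.range φ)) (g : β → R)
    (hg : ∀ x ∉ Set.range φ, moebiusTransform g x ≠ 0) :
    (∀ x, moebiusTransform g x ≠ 0) ↔ ∀ t, moebiusTransform (g ∘ φ) t ≠ 0 := by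
  simp only [moebiusTransform_comp_of_isLowerSet φ hφ]
  refine ⟨fun h t => h (φ t), fun h x => ?_⟩
  by_cases hx : x ∈ Set.range φ
  · obtain ⟨t, rfl⟩ := hx
    exact h t
  · exact hg x hx

end OrderEmbedding

section SemilatticeInf

variable [Fintype α] [SemilatticeInf α] [LocallyFiniteOrder α] [DecidableEq α] [CommRing R]

lemma meetMatrix_eq [DecidableLE α] (g : α → R) :
    Matrix.of (fun a b => g (a ⊓ b)) =
      (toMatrix (zeta R))ᵀ * diagonal (moebiusTransform g) * toMatrix (zeta R) := by
  ext a b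
  conv_lhs => rw [of_apply, ← moebiusTransform_vecMul_toMatrix_zeta g]
  rw [Matrix.mul_apply]
  simp only [vecMul, dotProduct, mul_diagonal, transpose_apply]
  refine sum_congr rfl fun k _ => ?_
  simp only [toMatrix, of_apply, zeta_apply, le_inf_iff]
  split_ifs <;> simp_all

lemma isUnit_meetMatrix_iff (g : α → R) :
    IsUnit (Matrix.of fun a b => g (a ⊓ b)) ↔ ∀ x, IsUnit (moebiusTransform g x) := by
  have hZ : IsUnit (toMatrix (zeta R : IncidenceAlgebra R α)) :=
    .of_mul_eq_one_right _ toMatrix_mu_mul_toMatrix_zeta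
  rw [meetMatrix_eq, hZ.mul_right_iff, ((isUnit_transpose _).2 hZ).mul_left_iff,
    isUnit_diagonal, Pi.isUnit_iff]

end SemilatticeInf

end IncidenceAlgebra

open IncidenceAlgebra

section JoinMatrix

variable {K P α : Type*} [Field K] [Lattice P] [Fintype α] [SemilatticeInf α] [DecidableEq α]
  (f : P → K)

lemma joinMatrix_eq (hsemi : ∀ a b, f a * f b = f (a ⊓ b) * f (a ⊔ b)) (hne : ∀ a, f a ≠ 0)
    (σ : InfHom α P) :
    Matrix.of (fun i j => f (σ i ⊔ σ j)) =
      diagonal (f ∘ σ) * Matrix.of (fun i j => (f (σ (i ⊓ j)))⁻¹) * diagonal (f ∘ σ) := by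
  ext i j
  rw [mul_diagonal, diagonal_mul, of_apply, of_apply, map_inf, Function.comp_apply,
    Function.comp_apply, mul_right_comm, hsemi, mul_comm (f _), mul_inv_cancel_right₀ (hne _)]

lemma isUnit_joinMatrix_iff [LocallyFiniteOrder α]
    (hsemi : ∀ a b, f a * f b = f (a ⊓ b) * f (a ⊔ b)) (hne : ∀ a, f a ≠ 0) (σ : InfHom α P) :
    IsUnit (Matrix.of fun i j => f (σ i ⊔ σ j)) ↔
      ∀ x, moebiusTransform (fun i => (f (σ i))⁻¹) x ≠ 0 := by
  have hD : IsUnit (diagonal (f ∘ σ)) :=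
    isUnit_diagonal.2 <| Pi.isUnit_iff.2 fun i => (hne (σ i)).isUnit
  simp only [joinMatrix_eq f hsemi hne σ, hD.mul_right_iff, hD.mul_left_iff,
    isUnit_meetMatrix_iff (fun i => (f (σ i))⁻¹), isUnit_iff_ne_zero]

end JoinMatrix

section MobiusS

variable {P : Type*} [Lattice P] (S : Finset P) [LocallyFiniteOrder S]

lemma mobiusS_eq_mu (a b : S) : mobiusS S a b = mu ℂ a b := by
  simp only [mobiusS, a.2, b.2, dif_pos]
  congr!
  exact Subsingleton.elim _ _

lemma sum_filter_le_mul_mobiusS (g : P → ℂ) {p : P} (hp : p ∈ S) :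
    ∑ z ∈ S with z ≤ p, g z * mobiusS S z p = moebiusTransform (fun z : S => g z) ⟨p, hp⟩ := by
  rw [sum_filter_of_ne fun z hzS hz => ?_, ← sum_coe_sort]
  · refine sum_congr rfl fun z _ => ?_
    rw [mobiusS_eq_mu S z ⟨p, hp⟩]
    rfl
  · contrapose! hz
    have hzp : ¬(⟨z, hzS⟩ : S) ≤ ⟨p, hp⟩ := hz
    rw [mobiusS_eq_mu S ⟨z, hzS⟩ ⟨p, hp⟩, apply_eq_zero_of_not_le hzp, mul_zero]

end MobiusS

theorem joinMatrix_insert_isUnit_iff_general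
    {P : Type*} [Lattice P]
    (f : P → ℂ) (hsemi : ∀ a b : P, f a * f b = f (a ⊓ b) * f (a ⊔ b))
    (hne : ∀ a : P, f a ≠ 0)
    (T : Finset P) (hT : ∀ a ∈ T, ∀ b ∈ T, a ⊓ b ∈ T)
    (p : P) (hp : p ∉ T) (habove : ∀ t ∈ T, ¬ p < t)
    (hS : ∀ a ∈ insert p T, ∀ b ∈ insert p T, a ⊓ b ∈ insert p T)
    (hsum : ∑ z ∈ (insert p T).filter (fun z => z ≤ p),
        (1 / f z) * mobiusS (insert p T) z p ≠ 0) :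
    IsUnit (Matrix.of fun i j : ↥(insert p T) => f ((i : P) ⊔ (j : P))) ↔
      IsUnit (Matrix.of fun i j : ↥T => f ((i : P) ⊔ (j : P))) := by
  have hTinf : ∀ ⦃a b⦄, a ∈ T → b ∈ T → a ⊓ b ∈ T := fun a b ha hb => hT a ha b hb
  have hSinf : ∀ ⦃a b⦄, a ∈ insert p T → b ∈ insert p T → a ⊓ b ∈ insert p T :=
    fun a b ha hb => hS a ha b hb
  let : SemilatticeInf ↥T := Subtype.semilatticeInf hTinf
  let : SemilatticeInf ↥(insert p T) := Subtype.semilatticeInf hSinf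
  let : LocallyFiniteOrder ↥T := Fintype.toLocallyFiniteOrder
  let : LocallyFiniteOrder ↥(insert p T) := Fintype.toLocallyFiniteOrder
  let φ : ↥T ↪o ↥(insert p T) :=
    OrderEmbedding.ofMapLEIff (fun t => ⟨t, mem_insert_of_mem t.2⟩) fun _ _ => Iff.rfl
  have hφ : IsLowerSet (Set.range φ) := by
    rintro _ x hxt ⟨t, rfl⟩
    obtain hxp | hxT := mem_insert.1 x.2
    · exact (habove t t.2 (lt_of_le_of_ne (hxp ▸ hxt) (ne_of_mem_of_not_mem t.2 hp).symm)).elim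
    · exact ⟨⟨x, hxT⟩, rfl⟩
  refine (isUnit_joinMatrix_iff f hsemi hne (InfHom.subtypeVal hSinf)).trans <|
    (forall_moebiusTransform_ne_zero_iff_of_isLowerSet φ hφ _ fun x hx => ?_).trans
      (isUnit_joinMatrix_iff f hsemi hne (InfHom.subtypeVal hTinf)).symm
  obtain rfl : x = ⟨p, mem_insert_self p T⟩ :=
    Subtype.ext <| (mem_insert.1 x.2).resolve_right fun hxT => hx ⟨⟨x, hxT⟩, rfl⟩
  simp only [one_div, sum_filter_le_mul_mobiusS _ (fun z => (f z)⁻¹) (mem_insert_self p T)]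
    at hsum
  exact hsum

/-- Theorem 3.1: Let `f` be semimultiplicative with nonzero values on a lattice `P`
with finite principal order ideals. Let `T` be a meet closed finite set, let `p ∉ T` be such that
no element of `T` is strictly above `p`, suppose `S = T ∪ {p}` is meet closed, and suppose
`Σ_{z ∈ S, z ≤ p} (1/f(z)) · μ_S(z, p) ≠ 0`. Then the join matrix `[S]_f` is invertible iff
the join matrix `[T]_f` is invertible. -/
theorem joinMatrix_insert_isUnit_iff
    {P : Type*} [Lattice P] (hfin : ∀ q : P, {y : P | y ≤ q}.Finite)
    (f : P → ℂ) (hsemi : ∀ a b : P, f a * f b = f (a ⊓ b) * f (a ⊔ b))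
    (hne : ∀ a : P, f a ≠ 0)
    (T : Finset P) (hT : ∀ a ∈ T, ∀ b ∈ T, a ⊓ b ∈ T)
    (p : P) (hp : p ∉ T) (habove : ∀ t ∈ T, ¬ p < t)
    (hS : ∀ a ∈ insert p T, ∀ b ∈ insert p T, a ⊓ b ∈ insert p T)
    (hsum : ∑ z ∈ (insert p T).filter (fun z => z ≤ p),
        (1 / f z) * mobiusS (insert p T) z p ≠ 0) :
    IsUnit (Matrix.of fun i j : ↥(insert p T) => f ((i : P) ⊔ (j : P))) ↔
      IsUnit (Matrix.of fun i j : ↥T => f ((i : P) ⊔ (j : P))) :=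
  joinMatrix_insert_isUnit_iff_general f hsemi hne T hT p hp habove hS hsum
end

section
/- (Theorem 3.3, chain case) Let S = {x_1, ..., x_n} be a chain x_1 < x_2 < ... < x_n in P and let f be semimultiplicative with f(x) ≠ 0 for all x ∈ P. Then the join matrix [S]_f is invertible if and only if f(x_k) ≠ f(x_{k-1}) for all k = 2, 3, ..., n. -/
/-!
On a chain the join matrix is `(f (x_{max i j}))_{i,j}`. Writing `d_k = f (x_k) - f (x_{k+1})`
with `f (x_n) := 0`, the telescoping identity `f (x_m) = ∑_{k ≥ m} d_k` factors it as `Lᵀ D L`,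
where `L` is the lower-triangular matrix of ones and `D = diag d`. Hence its determinant is
`∏ d_k`, whose last factor `f (x_{n-1})` never vanishes.
-/

open Matrix Finset

theorem Fin.sum_Ici_sub_succ {M : Type*} [AddCommGroup M] {n : ℕ} {g : ℕ → M} (hg : g n = 0)
    (m : Fin n) :
    ∑ k ∈ Ici m, (g k - g (k + 1)) = g m := by
  have hmap := sum_map (Ici m) Fin.valEmbedding (fun k => g k - g (k + 1))
  rw [Fin.map_valEmbedding_Ici] at hmap
  simp only [Fin.valEmbedding_apply] at hmap
  rw [← hmap, ← neg_neg (∑ k ∈ Ico _ n, _), ← sum_neg_distrib]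
  simp_rw [neg_sub]
  rw [sum_Ico_sub g m.isLt.le, hg, zero_sub, neg_neg]

namespace Matrix

variable {R : Type*} [CommRing R] {n : ℕ}

def lowerOnes (n : ℕ) : Matrix (Fin n) (Fin n) R :=
  of fun k i => if i ≤ k then 1 else 0

theorem det_lowerOnes : (lowerOnes n : Matrix (Fin n) (Fin n) R).det = 1 := by
  rw [det_of_isLowerTriangular]
  · simp [lowerOnes]
  · intro k i hik
    simp [lowerOnes, not_le.mpr (OrderDual.toDual_lt_toDual.mp hik)]

theorem of_sup_eq_lowerOnes_transpose_mul {g : ℕ → R} (hg : g n = 0) :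
    of (fun i j : Fin n => g ↑(i ⊔ j)) =
      (lowerOnes n)ᵀ * diagonal (fun k : Fin n => g k - g (k + 1)) * lowerOnes n := by
  ext i j
  have hterm : ∀ k : Fin n, (lowerOnes n)ᵀ i k * (g k - g (k + 1)) * lowerOnes n k j =
      if i ⊔ j ≤ k then g k - g (k + 1) else 0 := by
    intro k
    by_cases hik : i ≤ k <;> by_cases hjk : j ≤ k <;> simp [lowerOnes, hik, hjk]
  rw [mul_apply, of_apply, ← Fin.sum_Ici_sub_succ hg (i ⊔ j), ← filter_le_eq_Ici, sum_filter]
  simp only [mul_diagonal, hterm]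

theorem det_of_sup {g : ℕ → R} (hg : g n = 0) :
    (of fun i j : Fin n => g ↑(i ⊔ j)).det = ∏ k : Fin n, (g k - g (k + 1)) := by
  rw [of_sup_eq_lowerOnes_transpose_mul hg, det_mul, det_mul, det_transpose, det_lowerOnes,
    det_diagonal, one_mul, mul_one]

end Matrix

theorem joinMatrix_chain_isUnit_iff_general
    {P : Type*} [Lattice P]
    (f : P → ℂ)
    (hne : ∀ a : P, f a ≠ 0)
    {n : ℕ} (x : Fin n → P) (hchain : StrictMono x) :
    IsUnit (Matrix.of fun i j : Fin n => f (x i ⊔ x j)) ↔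
      ∀ i : ℕ, ∀ h : i + 1 < n,
        f (x ⟨i + 1, h⟩) ≠ f (x ⟨i, Nat.lt_of_succ_lt h⟩) := by
  set g : ℕ → ℂ := fun k => if h : k < n then f (x ⟨k, h⟩) else 0
  have hg : ∀ k (hk : k < n), g k = f (x ⟨k, hk⟩) := fun k hk => dif_pos hk
  have hjoin : (of fun i j : Fin n => f (x i ⊔ x j)) = of fun i j : Fin n => g ↑(i ⊔ j) := by
    ext i j
    rw [of_apply, of_apply, hg _ (i ⊔ j).isLt, Fin.eta, hchain.monotone.map_sup]
  rw [isUnit_iff_isUnit_det, hjoin, det_of_sup (dif_neg (lt_irrefl n)), isUnit_iff_ne_zero,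
    prod_ne_zero_iff]
  constructor
  · intro H i hi heq
    have hi' := Nat.lt_of_succ_lt hi
    exact H ⟨i, hi'⟩ (mem_univ _) (by rw [hg i hi', hg (i + 1) hi, heq, sub_self])
  · rintro H ⟨k, hk⟩ -
    by_cases hk' : k + 1 < n
    · rw [hg k hk, hg (k + 1) hk', sub_ne_zero]
      exact (H k hk').symm
    · rw [hg k hk, show g (k + 1) = 0 from dif_neg hk', sub_zero]
      exact hne _

/-- Theorem 3.3, chain case: If `S = {x_1, …, x_n}` is a chain
`x_1 < x_2 < ⋯ < x_n` in a lattice `P` with finite principal order ideals and `f` is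
semimultiplicative with nonzero values, then the join matrix `[S]_f` is invertible iff
`f(x_k) ≠ f(x_{k-1})` for all `k = 2, …, n`. -/
theorem joinMatrix_chain_isUnit_iff
    {P : Type*} [Lattice P] (hfin : ∀ q : P, {y : P | y ≤ q}.Finite)
    (f : P → ℂ) (hsemi : ∀ a b : P, f a * f b = f (a ⊓ b) * f (a ⊔ b))
    (hne : ∀ a : P, f a ≠ 0)
    {n : ℕ} (x : Fin n → P) (hchain : StrictMono x) :
    IsUnit (Matrix.of fun i j : Fin n => f (x i ⊔ x j)) ↔
      ∀ i : ℕ, ∀ h : i + 1 < n,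
        f (x ⟨i + 1, h⟩) ≠ f (x ⟨i, Nat.lt_of_succ_lt h⟩) :=
  joinMatrix_chain_isUnit_iff_general f hne x hchain
end

section
/- (Theorem 3.3, x_1-set case) Let S = {x_1, ..., x_n} be a set of n distinct elements of P such that x_i ∧ x_j = x_1 for all i ≠ j, and let f be semimultiplicative with f(x) ≠ 0 for all x ∈ P. Then the join matrix [S]_f is invertible if and only if f(x_k) ≠ f(x_1) for all k = 2, 3, ..., n. -/
/-!
For `i ≠ j` we have `x i ⊓ x j = x₁`, so semimultiplicativity gives
`f (x i ⊔ x j) = f (x i) f (x j) / f x₁`, while the diagonal entries are `f (x i)`. Subtracting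
`f (x i) / f x₁` times the first row from row `i`, and then the same on columns, diagonalises the
join matrix, with diagonal entries `f x₁` and `f (x i) (f x₁ - f (x i)) / f x₁` for `i ≠ 1`.
-/

theorem map_sup_eq_mul_div_of_inf_eq {P K : Type*} [Lattice P] [Field K] {f : P → K}
    (hsemi : ∀ a b : P, f a * f b = f (a ⊓ b) * f (a ⊔ b)) {a b c : P} (hc : f c ≠ 0)
    (h : a ⊓ b = c) : f (a ⊔ b) = f a * f b / f c := by
  rw [hsemi, h]
  field_simp

namespace Matrix

variable {K ι : Type*} [Field K] [Fintype ι] [DecidableEq ι]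

theorem det_eq_prod_of_offDiag_eq_mul_div {M : Matrix ι ι K} {v : ι → K} {k : ι}
    (hvk : v k ≠ 0) (hdiag : ∀ i, M i i = v i)
    (hoff : ∀ i j, i ≠ j → M i j = v i * v j / v k) :
    M.det = ∏ i, Function.update (fun i => v i * (v k - v i) / v k) k (v k) i := by
  set c : ι → K := Function.update (fun i => v i / v k) k 0
  set B : Matrix ι ι K := updateRow (diagonal fun i => v i * (v k - v i) / v k) k v
  have hrow : M.det = B.det := by
    refine det_eq_of_forall_row_eq_smul_add_const c k (by simp [c]) fun i j => ?_
    rcases eq_or_ne i j with rfl | hij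
    · by_cases hik : i = k
      · simp [B, c, hdiag, hik]
      · simp only [B, c, hdiag, ne_eq, hik, not_false_eq_true, updateRow_ne, diagonal_apply_eq,
          Function.update_of_ne, updateRow_self]
        field_simp
        ring
    · rw [hoff i j hij]
      by_cases hik : i = k
      · simp [B, c, hik, hvk]
      · simp only [B, c, ne_eq, hik, hij, not_false_eq_true, updateRow_ne, diagonal_apply_ne,
          Function.update_of_ne, updateRow_self, zero_add]
        field_simp
  have hcol :
      Bᵀ.det = (diagonal (Function.update (fun i => v i * (v k - v i) / v k) k (v k))).det := by
    refine det_eq_of_forall_row_eq_smul_add_const c k (by simp [c]) fun i j => ?_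
    rcases eq_or_ne i j with rfl | hij
    · rcases eq_or_ne i k with rfl | hik
      · simp [B, c]
      · simp [B, c, hik, Ne.symm hik]
    · rcases eq_or_ne j k with rfl | hjk
      · simp [B, c, hij, hvk]
      · simp [B, c, hij, hjk, Ne.symm hij, Ne.symm hjk]
  rw [hrow, ← det_transpose, hcol, det_diagonal]

theorem isUnit_iff_of_offDiag_eq_mul_div {M : Matrix ι ι K} {v : ι → K} {k : ι}
    (hv : ∀ i, v i ≠ 0) (hdiag : ∀ i, M i i = v i)
    (hoff : ∀ i j, i ≠ j → M i j = v i * v j / v k) :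
    IsUnit M ↔ ∀ i, i ≠ k → v i ≠ v k := by
  rw [isUnit_iff_isUnit_det, det_eq_prod_of_offDiag_eq_mul_div (hv k) hdiag hoff,
    isUnit_iff_ne_zero, Finset.prod_ne_zero_iff]
  refine ⟨fun h i hik hvi => h i (Finset.mem_univ i) (by simp [hik, hvi]), fun h i _ => ?_⟩
  rcases eq_or_ne i k with rfl | hik
  · simpa using hv i
  · simpa [hik, hv i, hv k, sub_eq_zero] using (h i hik).symm

end Matrix

theorem joinMatrix_x1set_isUnit_iff_general
    {P : Type*} [Lattice P]
    (f : P → ℂ) (hsemi : ∀ a b : P, f a * f b = f (a ⊓ b) * f (a ⊔ b))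
    (hne : ∀ a : P, f a ≠ 0)
    {n : ℕ} (hn : 0 < n) (x : Fin n → P)
    (hx1 : ∀ i j : Fin n, i ≠ j → x i ⊓ x j = x ⟨0, hn⟩) :
    IsUnit (Matrix.of fun i j : Fin n => f (x i ⊔ x j)) ↔
      ∀ k : Fin n, k ≠ ⟨0, hn⟩ → f (x k) ≠ f (x ⟨0, hn⟩) :=
  Matrix.isUnit_iff_of_offDiag_eq_mul_div (fun i => hne (x i)) (fun i => by simp)
    fun i j hij => map_sup_eq_mul_div_of_inf_eq hsemi (hne _) (hx1 i j hij)

/-- Theorem 3.3, `x₁`-set case: If `S = {x_1, …, x_n}` is a set of `n` distinct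
elements of a lattice `P` with finite principal order ideals such that `x_i ⊓ x_j = x_1` for all
`i ≠ j`, and `f` is semimultiplicative with nonzero values, then the join matrix `[S]_f` is
invertible iff `f(x_k) ≠ f(x_1)` for all `k = 2, …, n`. -/
theorem joinMatrix_x1set_isUnit_iff
    {P : Type*} [Lattice P] (hfin : ∀ q : P, {y : P | y ≤ q}.Finite)
    (f : P → ℂ) (hsemi : ∀ a b : P, f a * f b = f (a ⊓ b) * f (a ⊔ b))
    (hne : ∀ a : P, f a ≠ 0)
    {n : ℕ} (hn : 0 < n) (x : Fin n → P) (hinj : Function.Injective x)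
    (hx1 : ∀ i j : Fin n, i ≠ j → x i ⊓ x j = x ⟨0, hn⟩) :
    IsUnit (Matrix.of fun i j : Fin n => f (x i ⊔ x j)) ↔
      ∀ k : Fin n, k ≠ ⟨0, hn⟩ → f (x k) ≠ f (x ⟨0, hn⟩) :=
  joinMatrix_x1set_isUnit_iff_general f hsemi hne hn x hx1
end

section
/- (Corollary 3.1, chain case) Let x_1, x_2, ..., x_n be distinct positive integers forming a divisor chain, i.e., x_1 | x_2 | ... | x_n. Then the LCM matrix [S] on S = {x_1, ..., x_n} is invertible. -/
/-!
Along a divisor chain `lcm(x_i, x_j) = x_{max(i,j)}`, so the LCM matrix is the max-matrix of the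
sequence `x`. Subtracting the second row from the first and expanding shows that the max-matrix of
`y_0, …, y_n` has determinant `y_n · ∏ (y_i - y_{i+1})`, which is nonzero for distinct positive
`x_i`.
-/

open Matrix

def maxMatrix {ι R : Type*} [LinearOrder ι] (y : ι → R) : Matrix ι ι R :=
  Matrix.of fun i j => y (max i j)

theorem det_maxMatrix_fin_succ {R : Type*} [CommRing R] :
    ∀ {n : ℕ} (y : Fin (n + 1) → R),
      (maxMatrix y).det = y (Fin.last n) * ∏ i : Fin n, (y i.castSucc - y i.succ)
  | 0, y => by simp [maxMatrix]
  | n + 1, y => by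
    set B := (maxMatrix y).updateRow 0 (maxMatrix y 0 + (-1 : R) • maxMatrix y 1)
    have hdet : (maxMatrix y).det = B.det :=
      (det_updateRow_add_smul_self _ Fin.zero_ne_one _).symm
    have hB00 : B 0 0 = y 0 - y 1 := by simp [B, maxMatrix, sub_eq_add_neg]
    have hB0 : ∀ j : Fin (n + 1), B 0 j.succ = 0 := fun j => by
      simp [B, maxMatrix, max_eq_right (Fin.le_iff_val_le_val.mpr (by simp) : 1 ≤ j.succ)]
    have hsub : B.submatrix Fin.succ Fin.succ = maxMatrix (y ∘ Fin.succ) := by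
      ext i j
      simp [B, maxMatrix, Fin.succ_ne_zero, Fin.strictMono_succ.monotone.map_max]
    rw [hdet, det_succ_row_zero, Fin.sum_univ_succ, Fin.prod_univ_succ]
    simp only [hB0, hB00, mul_zero, zero_mul, Finset.sum_const_zero, add_zero, Fin.val_zero,
      pow_zero, one_mul, Fin.succAbove_zero, hsub, det_maxMatrix_fin_succ, Function.comp_apply,
      Fin.succ_last, Fin.castSucc_zero, Fin.succ_zero_eq_one, Fin.succ_castSucc]
    ring

theorem Nat.lcm_apply_eq_apply_max {ι : Type*} [LinearOrder ι] {x : ι → ℕ}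
    (hx : ∀ i j, i ≤ j → x i ∣ x j) (i j : ι) : Nat.lcm (x i) (x j) = x (max i j) := by
  rcases le_total i j with h | h
  · rw [max_eq_right h, Nat.lcm_eq_right_iff_dvd.mpr (hx i j h)]
  · rw [max_eq_left h, Nat.lcm_eq_left_iff_dvd.mpr (hx j i h)]

/-- Corollary 3.1, chain case: If `x_1, …, x_n` are distinct positive integers
forming a divisor chain `x_1 ∣ x_2 ∣ ⋯ ∣ x_n`, then the LCM matrix `[S]` is invertible. -/
theorem lcmMatrix_divisorChain_isUnit
    {n : ℕ} (x : Fin n → ℕ) (hinj : Function.Injective x)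
    (hpos : ∀ i, 0 < x i) (hchain : ∀ i j : Fin n, i ≤ j → x i ∣ x j) :
    IsUnit (Matrix.of fun i j : Fin n => (Nat.lcm (x i) (x j) : ℚ)) := by
  have hmax : (Matrix.of fun i j : Fin n => (Nat.lcm (x i) (x j) : ℚ)) =
      maxMatrix (fun i => (x i : ℚ)) := by
    ext i j
    simp [maxMatrix, Nat.lcm_apply_eq_apply_max hchain]
  rw [hmax, isUnit_iff_isUnit_det, isUnit_iff_ne_zero]
  cases n with
  | zero => simp
  | succ n =>
    rw [det_maxMatrix_fin_succ]
    refine mul_ne_zero (by exact_mod_cast (hpos _).ne') (Finset.prod_ne_zero_iff.mpr ?_)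
    intro i _
    exact sub_ne_zero.mpr (Nat.cast_injective.ne (hinj.ne Fin.castSucc_lt_succ.ne))
end

section
/- (Corollary 3.1, x_1-set case) Let S = {x_1, ..., x_n} be a set of distinct positive integers such that gcd(x_i, x_j) = x_1 for all i ≠ j. Then the LCM matrix [S] is invertible. -/
/-!
Let `a = x₀`. For `i ≠ j` the hypothesis gives `lcm (xᵢ, xⱼ) = xᵢ xⱼ / a`, so the LCM matrix is
`diag (d) + x (x / a)ᵀ` with `dᵢ = xᵢ - xᵢ² / a`. Here `d₀ = 0` while `dᵢ ≠ 0` for `i ≠ 0`, because the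
`xᵢ` are distinct and nonzero. A rank-one perturbation of a diagonal matrix with a single zero on the
diagonal is nonsingular as soon as the perturbing vectors are nonzero at that index: if `M w = 0`,
row `0` forces `(x / a) ⬝ w = 0`, the other rows then force `wᵢ = 0` for `i ≠ 0`, and
finally `(x / a) ⬝ w = w₀ = 0`.
-/

open Matrix

theorem Matrix.det_diagonal_add_vecMulVec_ne_zero {ι R : Type*} [Fintype ι] [DecidableEq ι]
    [CommRing R] [IsDomain R] {d u v : ι → R} {k : ι} (hdk : d k = 0) (huk : u k ≠ 0)
    (hvk : v k ≠ 0) (hd : ∀ i, i ≠ k → d i ≠ 0) :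
    (diagonal d + vecMulVec u v).det ≠ 0 := by
  rw [Ne, ← exists_mulVec_eq_zero_iff]
  rintro ⟨w, hw0, hw⟩
  have hrow : ∀ i, d i * w i + u i * (v ⬝ᵥ w) = 0 := fun i => by
    simpa [add_mulVec, mulVec_diagonal, vecMulVec_mulVec, mul_comm] using congrFun hw i
  have hvw : v ⬝ᵥ w = 0 := by simpa [hdk, huk] using hrow k
  have hw_off : ∀ i, i ≠ k → w i = 0 := fun i hi => by
    simpa [hvw, hd i hi] using hrow i
  have hwk : w k = 0 := by
    rwa [dotProduct, Finset.sum_eq_single k (fun i _ hi => by simp [hw_off i hi]) (by simp),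
      mul_eq_zero, or_iff_right hvk] at hvw
  exact hw0 (funext fun i => if hi : i = k then hi ▸ hwk else hw_off i hi)

-- `gcd a b = 0` only for `a = b = 0`, where both sides vanish.
theorem Nat.cast_lcm_eq_mul_div_gcd {K : Type*} [Field K] [CharZero K] (a b : ℕ) :
    (Nat.lcm a b : K) = a * b / Nat.gcd a b := by
  rcases Nat.eq_zero_or_pos (Nat.gcd a b) with h | h
  · obtain ⟨rfl, rfl⟩ := Nat.gcd_eq_zero_iff.mp h
    simp
  · rw [eq_div_iff (by exact_mod_cast h.ne'), mul_comm]
    exact_mod_cast Nat.gcd_mul_lcm a b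

theorem lcmMatrix_eq_diagonal_add_vecMulVec {ι : Type*} [DecidableEq ι] (x : ι → ℕ) (a : ℕ)
    (hgcd : ∀ i j, i ≠ j → Nat.gcd (x i) (x j) = a) :
    Matrix.of (fun i j => (Nat.lcm (x i) (x j) : ℚ)) =
      diagonal (fun i => (x i : ℚ) - x i ^ 2 / a) +
        vecMulVec (fun i => (x i : ℚ)) (fun j => x j / a) := by
  ext i j
  rcases eq_or_ne i j with rfl | hij
  · simp only [of_apply, Nat.lcm_self, Matrix.add_apply, diagonal_apply_eq, vecMulVec_apply]
    ring
  · simp [vecMulVec_apply, diagonal_apply_ne _ hij, Nat.cast_lcm_eq_mul_div_gcd, hgcd i j hij,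
      mul_div_assoc]

/-- Corollary 3.1, `x₁`-set case: If `S = {x_1, …, x_n}` is a set of distinct
positive integers with `gcd(x_i, x_j) = x_1` for all `i ≠ j`, then the LCM matrix `[S]` is
invertible. -/
theorem lcmMatrix_x1set_isUnit
    {n : ℕ} (hn : 0 < n) (x : Fin n → ℕ) (hinj : Function.Injective x)
    (hpos : ∀ i, 0 < x i)
    (hgcd : ∀ i j : Fin n, i ≠ j → Nat.gcd (x i) (x j) = x ⟨0, hn⟩) :
    IsUnit (Matrix.of fun i j : Fin n => (Nat.lcm (x i) (x j) : ℚ)) := by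
  set k : Fin n := ⟨0, hn⟩
  have hx : ∀ i, (x i : ℚ) ≠ 0 := fun i => by exact_mod_cast (hpos i).ne'
  rw [lcmMatrix_eq_diagonal_add_vecMulVec x _ hgcd, isUnit_iff_isUnit_det, isUnit_iff_ne_zero]
  refine det_diagonal_add_vecMulVec_ne_zero (k := k) ?_ (hx k) (by simp [hx k]) fun i hi => ?_
  · rw [sq, mul_div_cancel_right₀ _ (hx k), sub_self]
  · have hxi : (x i : ℚ) ≠ x k := by exact_mod_cast hinj.ne hi
    have hfactor : (x i : ℚ) - x i ^ 2 / x k = x i * (x k - x i) / x k := by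
      field_simp [hx k]
    rw [hfactor]
    exact div_ne_zero (mul_ne_zero (hx i) (sub_ne_zero.mpr hxi.symm)) (hx k)
end

section
/- (Theorem 3.4) Let n ≥ 3, let S = {x_1, ..., x_n} be a set of n distinct elements of P such that x_i ∧ x_j = x_1 for all distinct i, j ≤ n−1 and x_1 ∨ x_2 ∨ ... ∨ x_{n−1} ≤ x_n, and let f be semimultiplicative with f(x) ≠ 0 for all x ∈ P. Then the join matrix [S]_f is invertible if and only if f(x_k) ≠ f(x_1) for all k = 2, 3, ..., n−1 and 1/f(x_n) ≠ (Σ_{k=2}^{n−1} 1/f(x_k)) − (n−3)/f(x_1). -/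
/-!
Write `a = f ∘ x`, let `o` index `x_1` and `t` index `x_n`. Semimultiplicativity and
`x_i ⊓ x_j = x_1` give `a_1 · f(x_i ⊔ x_j) = a_i a_j` for distinct lower indices, while the row and
column of `t` are constantly `a_t`. If `a_k = a_1` for a middle index `k`, the columns of `o` and
`k` coincide. Otherwise the row equations force every kernel vector `v` to satisfy
`a_j v_j = c_j S` with `S = ∑_{j ≠ t} a_j v_j` and `c = (3 - n, 1, …, 1, -1)`, so the last row reads
`S · ∑ c_j / a_j = 0`; conversely `c / a` is a kernel vector when `∑ c_j / a_j = 0`. This sum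
vanishes exactly when the second condition fails.
-/

section

open Finset Matrix

variable {ι : Type*}

/-- The shape of the join matrix `[S]_f`: `a = f ∘ x`, `o` indexes the common meet `x_1` of the
lower elements and `t` the upper bound `x_n`. -/
structure IsBottomTopJoinMatrix (M : Matrix ι ι ℂ) (a : ι → ℂ) (o t : ι) : Prop where
  diag : ∀ i, M i i = a i
  col_top : ∀ i, M i t = a t
  row_top : ∀ j, M t j = a t
  off_diag : ∀ i j, i ≠ j → i ≠ t → j ≠ t → a o * M i j = a i * a j

theorem IsBottomTopJoinMatrix.of_meet_eq {P : Type*} [Lattice P] {f : P → ℂ}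
    (hsemi : ∀ a b : P, f a * f b = f (a ⊓ b) * f (a ⊔ b)) (x : ι → P) {o t : ι}
    (hmeet : ∀ i j, i ≠ j → i ≠ t → j ≠ t → x i ⊓ x j = x o) (htop : ∀ i, x i ≤ x t) :
    IsBottomTopJoinMatrix (of fun i j => f (x i ⊔ x j)) (f ∘ x) o t where
  diag i := by simp
  col_top i := by simp [sup_eq_right.2 (htop i)]
  row_top j := by simp [sup_eq_left.2 (htop j)]
  off_diag i j hij hi hj := by
    rw [of_apply, Function.comp_apply, Function.comp_apply, Function.comp_apply, hsemi (x i),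
      hmeet i j hij hi hj]

section kernelCoeff

variable [Fintype ι] [DecidableEq ι]

/-- The coefficients `c` with `a_j v_j = c_j S` on the kernel. -/
def kernelCoeff (o t : ι) (j : ι) : ℂ :=
  if j = t then -1 else if j = o then 3 - Fintype.card ι else 1

variable {o t : ι}

theorem kernelCoeff_top : kernelCoeff o t t = -1 := if_pos rfl

theorem kernelCoeff_bot (hot : o ≠ t) : kernelCoeff o t o = 3 - Fintype.card ι := by
  rw [kernelCoeff, if_neg hot, if_pos rfl]

theorem kernelCoeff_of_ne {j : ι} (hjo : j ≠ o) (hjt : j ≠ t) : kernelCoeff o t j = 1 := by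
  rw [kernelCoeff, if_neg hjt, if_neg hjo]

theorem sum_kernelCoeff_erase_top (hot : o ≠ t) :
    ∑ j ∈ univ.erase t, kernelCoeff o t j = 1 := by
  have hcard : ((univ.erase t).erase o).card + 1 + 1 = Fintype.card ι := by
    rw [card_erase_add_one (mem_erase.2 ⟨hot, mem_univ o⟩), card_erase_add_one (mem_univ t),
      card_univ]
  have hmid : ∀ j ∈ (univ.erase t).erase o, kernelCoeff o t j = 1 := fun j hj =>
    kernelCoeff_of_ne (ne_of_mem_erase hj) (ne_of_mem_erase (mem_of_mem_erase hj))
  rw [← sum_erase_add _ _ (mem_erase.2 ⟨hot, mem_univ o⟩), sum_congr rfl hmid, sum_const,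
    nsmul_one, kernelCoeff_bot hot, ← hcard]
  push_cast
  ring

theorem sum_kernelCoeff_div_eq_zero_iff (hot : o ≠ t) (a : ι → ℂ) :
    ∑ j, kernelCoeff o t j / a j = 0 ↔
      1 / a t = ∑ k ∈ (univ.erase t).erase o, 1 / a k - ((Fintype.card ι : ℂ) - 3) / a o := by
  have hmid : ∀ k ∈ (univ.erase t).erase o, kernelCoeff o t k / a k = 1 / a k := fun k hk => by
    rw [kernelCoeff_of_ne (ne_of_mem_erase hk) (ne_of_mem_erase (mem_of_mem_erase hk))]
  have hsplit : ∑ j, kernelCoeff o t j / a j =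
      -(1 / a t - (∑ k ∈ (univ.erase t).erase o, 1 / a k - ((Fintype.card ι : ℂ) - 3) / a o)) := by
    rw [← sum_erase_add _ _ (mem_univ t), ← sum_erase_add _ _ (mem_erase.2 ⟨hot, mem_univ o⟩),
      sum_congr rfl hmid, kernelCoeff_top, kernelCoeff_bot hot]
    ring
  rw [hsplit, neg_eq_zero, sub_eq_zero]

end kernelCoeff

namespace IsBottomTopJoinMatrix

variable {M : Matrix ι ι ℂ} {a : ι → ℂ} {o t : ι}

theorem col_eq_of_eq (h : IsBottomTopJoinMatrix M a o t) (hot : o ≠ t) (ho : a o ≠ 0) {k : ι}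
    (hkt : k ≠ t) (hk : a k = a o) (i : ι) : M i k = M i o := by
  rcases eq_or_ne i t with rfl | hit
  · rw [h.row_top, h.row_top]
  have hcol : ∀ j, j ≠ t → a j = a o → a o * M i j = a i * a o := fun j hjt hj => by
    rcases eq_or_ne i j with rfl | hij
    · rw [h.diag, hj, mul_comm]
    · rw [h.off_diag i j hij hit hjt, hj]
  exact mul_left_cancel₀ ho (by rw [hcol k hkt hk, hcol o hot rfl])

variable [Fintype ι]

theorem mulVec_top (h : IsBottomTopJoinMatrix M a o t) (v : ι → ℂ) :
    (M *ᵥ v) t = a t * ∑ j, v j := by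
  simp only [mulVec, dotProduct, h.row_top, mul_sum]

variable [DecidableEq ι]

theorem mul_mulVec_of_ne_top (h : IsBottomTopJoinMatrix M a o t) (v : ι → ℂ) {i : ι}
    (hi : i ≠ t) :
    a o * (M *ᵥ v) i =
      a i * ∑ j ∈ univ.erase t, a j * v j + (a o - a i) * a i * v i + a o * (a t * v t) := by
  have hterm : ∀ j ∈ univ.erase t, a o * (M i j * v j) =
      a i * (a j * v j) + if i = j then (a o - a i) * a i * v i else 0 := by
    intro j hj
    split_ifs with hij
    · subst hij
      rw [h.diag]
      ring
    · rw [add_zero, ← mul_assoc, ← mul_assoc, h.off_diag i j hij hi (ne_of_mem_erase hj)]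
  rw [mulVec, dotProduct, ← sum_erase_add _ _ (mem_univ t), h.col_top, mul_add, mul_sum,
    sum_congr rfl hterm, sum_add_distrib, sum_ite_eq, if_pos (mem_erase.2 ⟨hi, mem_univ i⟩),
    ← mul_sum]

theorem mul_eq_kernelCoeff_mul_of_mulVec_eq_zero (h : IsBottomTopJoinMatrix M a o t)
    (hot : o ≠ t) (ho : a o ≠ 0) (hmid : ∀ k ∈ (univ.erase t).erase o, a k ≠ a o)
    {v : ι → ℂ} (hv : M *ᵥ v = 0) (j : ι) :
    a j * v j = kernelCoeff o t j * ∑ i ∈ univ.erase t, a i * v i := by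
  set S := ∑ i ∈ univ.erase t, a i * v i
  have hrow : ∀ i, i ≠ t → a i * S + (a o - a i) * a i * v i + a o * (a t * v t) = 0 :=
    fun i hi => by rw [← h.mul_mulVec_of_ne_top v hi, hv, Pi.zero_apply, mul_zero]
  have htop : a t * v t = -S :=
    mul_left_cancel₀ ho (by linear_combination hrow o hot)
  have hmiddle : ∀ i ∈ (univ.erase t).erase o, a i * v i = kernelCoeff o t i * S := by
    intro i hi
    have hit := ne_of_mem_erase (mem_of_mem_erase hi)
    rw [kernelCoeff_of_ne (ne_of_mem_erase hi) hit, one_mul]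
    exact mul_left_cancel₀ (sub_ne_zero.2 (hmid i hi).symm)
      (by linear_combination hrow i hit - a o * htop)
  have hbot : a o * v o = kernelCoeff o t o * S := by
    have ho_mem : o ∈ univ.erase t := mem_erase.2 ⟨hot, mem_univ o⟩
    have hsplit := sum_erase_add _ (fun i => a i * v i) ho_mem
    have hcoeff := sum_erase_add _ (kernelCoeff o t) ho_mem
    rw [sum_congr rfl hmiddle, ← sum_mul] at hsplit
    rw [sum_kernelCoeff_erase_top hot] at hcoeff
    linear_combination hsplit - S * hcoeff
  by_cases hjt : j = t
  · subst hjt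
    rw [htop, kernelCoeff_top, neg_one_mul]
  by_cases hjo : j = o
  · exact hjo ▸ hbot
  exact hmiddle j (mem_erase.2 ⟨hjo, mem_erase.2 ⟨hjt, mem_univ j⟩⟩)

theorem mulVec_kernelCoeff_div (h : IsBottomTopJoinMatrix M a o t) (hot : o ≠ t)
    (ha : ∀ i, a i ≠ 0) (hsum : ∑ j, kernelCoeff o t j / a j = 0) :
    M *ᵥ (fun j => kernelCoeff o t j / a j) = 0 := by
  funext i
  rcases eq_or_ne i t with rfl | hit
  · rw [h.mulVec_top, hsum, mul_zero, Pi.zero_apply]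
  apply mul_left_cancel₀ (ha o)
  have hcancel : ∀ j, a j * (kernelCoeff o t j / a j) = kernelCoeff o t j :=
    fun j => mul_div_cancel₀ _ (ha j)
  rw [h.mul_mulVec_of_ne_top _ hit, Pi.zero_apply, mul_zero, mul_assoc (a o - a i), hcancel,
    hcancel, sum_congr rfl fun j _ => hcancel j, sum_kernelCoeff_erase_top hot, kernelCoeff_top]
  rcases eq_or_ne i o with rfl | hio
  · ring
  · rw [kernelCoeff_of_ne hio hit]
    ring

theorem eq_zero_of_mulVec_eq_zero (h : IsBottomTopJoinMatrix M a o t) (hot : o ≠ t)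
    (ha : ∀ i, a i ≠ 0) (hmid : ∀ k ∈ (univ.erase t).erase o, a k ≠ a o)
    (hsum : ∑ j, kernelCoeff o t j / a j ≠ 0) {v : ι → ℂ} (hv : M *ᵥ v = 0) : v = 0 := by
  set S := ∑ i ∈ univ.erase t, a i * v i
  have hcoord : ∀ j, v j = kernelCoeff o t j / a j * S := fun j => by
    rw [div_mul_eq_mul_div, eq_div_iff (ha j), mul_comm,
      h.mul_eq_kernelCoeff_mul_of_mulVec_eq_zero hot (ha o) hmid hv]
  have hsum_v : ∑ j, v j = 0 := by
    have htop := congrFun hv t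
    rw [h.mulVec_top, Pi.zero_apply] at htop
    exact (mul_eq_zero.1 htop).resolve_left (ha t)
  have hS : S = 0 := by
    rw [sum_congr rfl fun j _ => hcoord j, ← sum_mul] at hsum_v
    exact (mul_eq_zero.1 hsum_v).resolve_left hsum
  funext j
  rw [hcoord, hS, mul_zero, Pi.zero_apply]

theorem isUnit_iff (h : IsBottomTopJoinMatrix M a o t) (hot : o ≠ t) (ha : ∀ i, a i ≠ 0) :
    IsUnit M ↔ (∀ k ∈ (univ.erase t).erase o, a k ≠ a o) ∧
      1 / a t ≠ ∑ k ∈ (univ.erase t).erase o, 1 / a k - ((Fintype.card ι : ℂ) - 3) / a o := by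
  have hcrit := sum_kernelCoeff_div_eq_zero_iff hot a
  rw [isUnit_iff_isUnit_det, isUnit_iff_ne_zero]
  constructor
  · intro hdet
    refine ⟨fun k hk hko => hdet (det_zero_of_column_eq (ne_of_mem_erase hk)
      (h.col_eq_of_eq hot (ha o) (ne_of_mem_erase (mem_of_mem_erase hk)) hko)), fun hsum => ?_⟩
    have hne : (fun j => kernelCoeff o t j / a j) ≠ 0 := fun hw => by
      simpa [kernelCoeff_top, ha t] using congrFun hw t
    exact hdet (exists_mulVec_eq_zero_iff.1
      ⟨_, hne, h.mulVec_kernelCoeff_div hot ha (hcrit.2 hsum)⟩)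
  · rintro ⟨hmid, hsum⟩ hdet
    obtain ⟨v, hv0, hv⟩ := exists_mulVec_eq_zero_iff.2 hdet
    exact hv0 (h.eq_zero_of_mulVec_eq_zero hot ha hmid (mt hcrit.1 hsum) hv)

end IsBottomTopJoinMatrix

end

/-- Theorem 3.4: Let `n ≥ 3`, let `S = {x_1, …, x_n}` be a set of `n` distinct
elements of a lattice `P` with finite principal order ideals such that `x_i ⊓ x_j = x_1` for all
distinct `i, j ≤ n−1` and `x_1 ⊔ ⋯ ⊔ x_{n−1} ≤ x_n`, and let `f` be semimultiplicative with
nonzero values. Then `[S]_f` is invertible iff `f(x_k) ≠ f(x_1)` for `k = 2, …, n−1` and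
`1/f(x_n) ≠ (Σ_{k=2}^{n−1} 1/f(x_k)) − (n−3)/f(x_1)`.
(Here `Fin n` is 0-indexed: `x ⟨0,_⟩` is `x_1` and `x ⟨n-1,_⟩` is `x_n`.) -/
theorem joinMatrix_x1set_plus_top_isUnit_iff
    {P : Type*} [Lattice P]
    (f : P → ℂ) (hsemi : ∀ a b : P, f a * f b = f (a ⊓ b) * f (a ⊔ b))
    (hne : ∀ a : P, f a ≠ 0)
    {n : ℕ} (hn : 3 ≤ n) (x : Fin n → P)
    (hx1 : ∀ i j : Fin n, i ≠ j → (i : ℕ) < n - 1 → (j : ℕ) < n - 1 →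
      x i ⊓ x j = x ⟨0, by omega⟩)
    (htop : ∀ i : Fin n, (i : ℕ) < n - 1 → x i ≤ x ⟨n - 1, by omega⟩) :
    IsUnit (Matrix.of fun i j : Fin n => f (x i ⊔ x j)) ↔
      ((∀ k : Fin n, 0 < (k : ℕ) → (k : ℕ) < n - 1 → f (x k) ≠ f (x ⟨0, by omega⟩)) ∧
        1 / f (x ⟨n - 1, by omega⟩) ≠
          (∑ k ∈ Finset.univ.filter (fun k : Fin n => 0 < (k : ℕ) ∧ (k : ℕ) < n - 1),
            1 / f (x k)) - ((n : ℂ) - 3) / f (x ⟨0, by omega⟩)) := by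
  set o : Fin n := ⟨0, by omega⟩
  set t : Fin n := ⟨n - 1, by omega⟩
  have hlt : ∀ i : Fin n, i ≠ t ↔ (i : ℕ) < n - 1 := fun i => by
    rw [Ne, Fin.ext_iff, show (t : ℕ) = n - 1 from rfl]
    omega
  have hot : o ≠ t := (hlt o).2 (show 0 < n - 1 by omega)
  have hmid : Finset.univ.filter (fun k : Fin n => 0 < (k : ℕ) ∧ (k : ℕ) < n - 1) =
      (Finset.univ.erase t).erase o := by
    ext k
    rw [Finset.mem_filter, Finset.mem_erase, Finset.mem_erase, hlt, Ne, Fin.ext_iff,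
      show (o : ℕ) = 0 from rfl]
    simp only [Finset.mem_univ, true_and, and_true]
    omega
  have hM : IsBottomTopJoinMatrix (Matrix.of fun i j => f (x i ⊔ x j)) (f ∘ x) o t :=
    .of_meet_eq hsemi x
      (fun i j hij hi hj => hx1 i j hij ((hlt i).1 hi) ((hlt j).1 hj))
      (fun i => (eq_or_ne i t).elim (fun hit => hit ▸ le_rfl) fun hit => htop i ((hlt i).1 hit))
  rw [hM.isUnit_iff hot fun i => hne (x i), ← hmid, Fintype.card_fin]
  simp only [Finset.mem_filter, Finset.mem_univ, true_and, and_imp, Function.comp_apply]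
end

section
/- (Corollary 4.1, second part) If S is a gcd-closed set of distinct positive integers with at most 5 elements, then the LCM matrix [S] is invertible. -/
/-!
For a gcd-closed set `S` of positive integers, the matrix `(f (gcd xᵢ xⱼ))` factors as
`E * diag α * Eᵀ`, where `E` is the divisibility incidence matrix of `S` (unitriangular once `S`
is sorted) and `α` is the Möbius inversion of `f` on `(S, ∣)`. As `lcm x y = x * y / gcd x y`,
the LCM matrix is `diag x * (1 / gcd xᵢ xⱼ) * diag x`, so it is invertible as soon as `α x ≠ 0`
for `f n = 1 / n`.

Now `α x = 1 / x - ∑ α y` over the proper divisors `y` of `x` in `S`, and by inclusion–exclusion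
this sum is expressed through the maximal proper divisors and their gcds. When
`|S| ≤ 5` there are at most four proper divisors, hence at most three maximal ones `c, d, e`
(the gcd of two of them is a further proper divisor), and when there are three their pairwise gcds
all equal one `a`. So `α x` is `1 / x`, `1 / x - 1 / c`, `1 / x - 1 / c - 1 / d + 1 / gcd c d` or
`1 / x - 1 / c - 1 / d - 1 / e + 2 / a`, and none of these vanishes: `c`, `d` are distinct proper
multiples of `gcd c d`, and `c`, `d`, `e` are proper multiples of `a`.
-/

open Finset Matrix

section MoebiusInversion

variable {R : Type*} [AddCommGroup R]

theorem Finset.sum_filter_or {α : Type*} [DecidableEq α] (s : Finset α) (p q : α → Prop)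
    [DecidablePred p] [DecidablePred q] (g : α → R) :
    ∑ y ∈ s with (p y ∨ q y), g y =
      ∑ y ∈ s with p y, g y + ∑ y ∈ s with q y, g y - ∑ y ∈ s with (p y ∧ q y), g y := by
  rw [filter_or, filter_and, eq_sub_iff_add_eq, sum_union_inter]

def moebiusInv (S : Finset ℕ) (f : ℕ → R) (x : ℕ) : R :=
  f x - ∑ y ∈ (S.filter fun y => y ∣ x ∧ y < x).attach, moebiusInv S f y
termination_by x
decreasing_by exact (mem_filter.1 y.2).2.2

variable (S : Finset ℕ) (f : ℕ → R)

theorem moebiusInv_eq (x : ℕ) :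
    moebiusInv S f x = f x - ∑ y ∈ S with y ∣ x ∧ y < x, moebiusInv S f y := by
  rw [moebiusInv, sum_attach]

theorem sum_moebiusInv_dvd {x : ℕ} (hxS : x ∈ S) (hx : 0 < x) :
    ∑ y ∈ S with y ∣ x, moebiusInv S f y = f x := by
  have h : S.filter (· ∣ x) = insert x (S.filter fun y => y ∣ x ∧ y < x) := by
    ext y
    simp only [mem_filter, mem_insert]
    have := Nat.le_of_dvd (m := y) hx
    have := dvd_refl x
    grind
  rw [h, sum_insert (by simp), moebiusInv_eq, sub_add_cancel]

variable {S f}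

theorem sum_moebiusInv_dvd_or_dvd (hpos : ∀ a ∈ S, 0 < a)
    (hgcd : ∀ a ∈ S, ∀ b ∈ S, Nat.gcd a b ∈ S) {c d : ℕ} (hc : c ∈ S) (hd : d ∈ S) :
    ∑ y ∈ S with (y ∣ c ∨ y ∣ d), moebiusInv S f y = f c + f d - f (Nat.gcd c d) := by
  simp_rw [sum_filter_or, ← Nat.dvd_gcd_iff]
  rw [sum_moebiusInv_dvd S f hc (hpos c hc), sum_moebiusInv_dvd S f hd (hpos d hd),
    sum_moebiusInv_dvd S f (hgcd c hc d hd) (hpos _ (hgcd c hc d hd))]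

theorem sum_moebiusInv_dvd_or_dvd_or_dvd (hpos : ∀ a ∈ S, 0 < a)
    (hgcd : ∀ a ∈ S, ∀ b ∈ S, Nat.gcd a b ∈ S) {c d e : ℕ} (hc : c ∈ S) (hd : d ∈ S)
    (he : e ∈ S) :
    ∑ y ∈ S with (y ∣ c ∨ y ∣ d ∨ y ∣ e), moebiusInv S f y =
      f c + f d + f e - f (Nat.gcd c d) - f (Nat.gcd c e) - f (Nat.gcd d e) +
        f (Nat.gcd (Nat.gcd c d) e) := by
  have hmeet : ∀ y, y ∣ c ∧ (y ∣ d ∨ y ∣ e) ↔ y ∣ Nat.gcd c d ∨ y ∣ Nat.gcd c e := by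
    simp only [Nat.dvd_gcd_iff]; tauto
  have hgcd' : Nat.gcd (Nat.gcd c d) (Nat.gcd c e) = Nat.gcd (Nat.gcd c d) e := by
    rw [← Nat.gcd_assoc, Nat.gcd_comm _ c, ← Nat.gcd_assoc, Nat.gcd_self]
  rw [sum_filter_or, filter_congr fun y _ => hmeet y, sum_moebiusInv_dvd S f hc (hpos c hc),
    sum_moebiusInv_dvd_or_dvd hpos hgcd hd he,
    sum_moebiusInv_dvd_or_dvd hpos hgcd (hgcd c hc d hd) (hgcd c hc e he), hgcd']
  abel

end MoebiusInversion

section GcdMatrix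

def dvdMatrix (S : Finset ℕ) (R : Type*) [Zero R] [One R] : Matrix S S R :=
  of fun i j => if (j : ℕ) ∣ i then 1 else 0

variable {R : Type*} [CommRing R] {S : Finset ℕ}

theorem det_dvdMatrix (hpos : ∀ a ∈ S, 0 < a) : (dvdMatrix S R).det = 1 := by
  rw [det_of_isLowerTriangular (dvdMatrix S R) fun i j (hij : i < j) => if_neg fun hji =>
    (Nat.le_of_dvd (hpos i i.2) hji).not_gt hij]
  simp [dvdMatrix]

theorem gcdMatrix_eq_dvdMatrix_mul_diagonal_mul (hpos : ∀ a ∈ S, 0 < a)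
    (hgcd : ∀ a ∈ S, ∀ b ∈ S, Nat.gcd a b ∈ S) (f : ℕ → R) :
    of (fun i j : S => f (Nat.gcd i j)) =
      dvdMatrix S R * diagonal (fun k : S => moebiusInv S f k) * (dvdMatrix S R)ᵀ := by
  ext i j
  have hij := hgcd i i.2 j j.2
  rw [of_apply, ← sum_moebiusInv_dvd S f hij (hpos _ hij), sum_filter, ← sum_coe_sort S, mul_apply]
  refine sum_congr rfl fun k _ => ?_
  simp only [dvdMatrix, Nat.dvd_gcd_iff, mul_diagonal, of_apply, transpose_apply]
  split_ifs <;> simp_all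

theorem isUnit_gcdMatrix (hpos : ∀ a ∈ S, 0 < a)
    (hgcd : ∀ a ∈ S, ∀ b ∈ S, Nat.gcd a b ∈ S) {f : ℕ → R}
    (hf : ∀ x ∈ S, IsUnit (moebiusInv S f x)) :
    IsUnit (of fun i j : S => f (Nat.gcd i j)) := by
  have hE : IsUnit (dvdMatrix S R) := by
    rw [isUnit_iff_isUnit_det, det_dvdMatrix hpos]; exact isUnit_one
  rw [gcdMatrix_eq_dvdMatrix_mul_diagonal_mul hpos hgcd]
  have hD : IsUnit (diagonal fun k : S => moebiusInv S f k) :=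
    isUnit_diagonal.2 (Pi.isUnit_iff.2 fun k => hf k k.2)
  exact (hE.mul hD).mul ((isUnit_transpose _).2 hE)

end GcdMatrix

theorem lcmMatrix_eq_diagonal_mul_inv_gcdMatrix_mul_diagonal {K : Type*} [Field K] [CharZero K]
    (S : Finset ℕ) :
    of (fun i j : S => (Nat.lcm i j : K)) =
      diagonal (fun i : S => (i : K)) * of (fun i j : S => ((Nat.gcd i j : ℕ) : K)⁻¹) *
        diagonal (fun i : S => (i : K)) := by
  ext i j
  rw [mul_diagonal, diagonal_mul, of_apply, of_apply]
  rcases Nat.eq_zero_or_pos (Nat.gcd i j) with h | h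
  · simp [Nat.gcd_eq_zero_iff.1 h]
  · rw [mul_right_comm, eq_mul_inv_iff_mul_eq₀ (Nat.cast_ne_zero.2 h.ne')]
    exact_mod_cast Nat.lcm_mul_gcd ..

theorem Nat.two_mul_le_of_dvd_of_ne {a c : ℕ} (hc : 0 < c) (h : a ∣ c) (hne : a ≠ c) :
    2 * a ≤ c := by
  obtain ⟨k, rfl⟩ := h
  rcases k with _ | _ | k
  · simp at hc
  · simp at hne
  · nlinarith

theorem inv_add_inv_lt_inv_gcd {c d : ℕ} (hc : 0 < c) (hd : 0 < d) (hcd : c ≠ d)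
    (hgc : Nat.gcd c d ≠ c) (hgd : Nat.gcd c d ≠ d) :
    (c : ℚ)⁻¹ + (d : ℚ)⁻¹ < (Nat.gcd c d : ℚ)⁻¹ := by
  obtain ⟨k, hk⟩ := Nat.gcd_dvd_left c d
  obtain ⟨l, hl⟩ := Nat.gcd_dvd_right c d
  set b := Nat.gcd c d
  have hb : 0 < b := Nat.gcd_pos_of_pos_left d hc
  have hk2 : 2 ≤ k := by rcases k with _ | _ | k <;> simp_all
  have hl2 : 2 ≤ l := by rcases l with _ | _ | l <;> simp_all
  have hkl : k ≠ l := by rintro rfl; exact hcd (hk.trans hl.symm)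
  have key : k + l < k * l := by
    rcases hkl.lt_or_gt with h | h <;> nlinarith
  rw [hk, hl]
  field_simp
  norm_cast
  nlinarith [Nat.mul_lt_mul_of_pos_left key (Nat.mul_pos hb hb)]

theorem inv_add_inv_add_inv_lt_two_mul_inv {a c d e : ℕ} (hc : 0 < c) (hd : 0 < d) (he : 0 < e)
    (hac : a ∣ c) (had : a ∣ d) (hae : a ∣ e) (hac' : a ≠ c) (had' : a ≠ d) (hae' : a ≠ e) :
    (c : ℚ)⁻¹ + (d : ℚ)⁻¹ + (e : ℚ)⁻¹ < 2 * (a : ℚ)⁻¹ := by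
  have ha : (0 : ℚ) < a := by exact_mod_cast Nat.pos_of_dvd_of_pos hac hc
  have bound {z : ℕ} (hz : 0 < z) (haz : a ∣ z) (hne : a ≠ z) : (z : ℚ)⁻¹ ≤ (2 * a : ℚ)⁻¹ :=
    inv_anti₀ (by positivity) (by exact_mod_cast Nat.two_mul_le_of_dvd_of_ne hz haz hne)
  have := bound hc hac hac'
  have := bound hd had had'
  have := bound he hae hae'
  rw [mul_inv] at *
  nlinarith [inv_pos.2 ha]

def maximalDvd (P : Finset ℕ) : Finset ℕ := P.filter fun m => ∀ z ∈ P, m ∣ z → z = m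

section MaximalDvd

variable {P : Finset ℕ}

theorem maximalDvd_subset : maximalDvd P ⊆ P := filter_subset _ _

theorem exists_dvd_mem_maximalDvd (hP : ∀ y ∈ P, 0 < y) {y : ℕ} (hy : y ∈ P) :
    ∃ m ∈ maximalDvd P, y ∣ m := by
  obtain ⟨m, hm, hmax⟩ := (P.filter (y ∣ ·)).exists_max_image id ⟨y, mem_filter.2 ⟨hy, dvd_rfl⟩⟩
  obtain ⟨hmP, hym⟩ := mem_filter.1 hm
  refine ⟨m, mem_filter.2 ⟨hmP, fun z hz hmz => ?_⟩, hym⟩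
  exact le_antisymm (hmax z (mem_filter.2 ⟨hz, hym.trans hmz⟩)) (Nat.le_of_dvd (hP z hz) hmz)

theorem gcd_notMem_maximalDvd {c d : ℕ} (hc : c ∈ maximalDvd P) (hd : d ∈ maximalDvd P)
    (hcd : c ≠ d) : Nat.gcd c d ∉ maximalDvd P := fun hg =>
  have hgc := (mem_filter.1 hg).2 c (maximalDvd_subset hc) (Nat.gcd_dvd_left c d)
  have hgd := (mem_filter.1 hg).2 d (maximalDvd_subset hd) (Nat.gcd_dvd_right c d)
  hcd (hgc.trans hgd.symm)

theorem card_maximalDvd_lt (hgcd : ∀ c ∈ P, ∀ d ∈ P, Nat.gcd c d ∈ P)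
    (h : 1 < (maximalDvd P).card) : (maximalDvd P).card < P.card := by
  obtain ⟨c, hc, d, hd, hcd⟩ := one_lt_card.1 h
  refine card_lt_card ((ssubset_iff_of_subset maximalDvd_subset).2 ⟨Nat.gcd c d, ?_, ?_⟩)
  · exact hgcd c (maximalDvd_subset hc) d (maximalDvd_subset hd)
  · exact gcd_notMem_maximalDvd hc hd hcd

theorem gcd_eq_gcd_of_card_le_card_maximalDvd_add_one
    (hgcd : ∀ c ∈ P, ∀ d ∈ P, Nat.gcd c d ∈ P) (hcard : P.card ≤ (maximalDvd P).card + 1)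
    {c d e : ℕ} (hc : c ∈ maximalDvd P) (hd : d ∈ maximalDvd P) (he : e ∈ maximalDvd P)
    (hcd : c ≠ d) (hce : c ≠ e) : Nat.gcd c e = Nat.gcd c d := by
  have hsdiff : (P \ maximalDvd P).card ≤ 1 := by
    rw [card_sdiff_of_subset maximalDvd_subset]; omega
  have gcd_mem {c d} (hc : c ∈ maximalDvd P) (hd : d ∈ maximalDvd P) (hcd : c ≠ d) :
      Nat.gcd c d ∈ P \ maximalDvd P :=
    mem_sdiff.2 ⟨hgcd c (maximalDvd_subset hc) d (maximalDvd_subset hd),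
      gcd_notMem_maximalDvd hc hd hcd⟩
  exact card_le_one.1 hsdiff _ (gcd_mem hc he hce) _ (gcd_mem hc hd hcd)

end MaximalDvd

theorem moebiusInv_eq_sub_sum_dvd_maximalDvd {R : Type*} [AddCommGroup R] {S : Finset ℕ}
    (hpos : ∀ a ∈ S, 0 < a) (f : ℕ → R) (x : ℕ) :
    moebiusInv S f x = f x - ∑ y ∈ S with
      ∃ m ∈ maximalDvd (S.filter fun y => y ∣ x ∧ y < x), y ∣ m, moebiusInv S f y := by
  rw [moebiusInv_eq]
  congr 2
  ext y
  simp only [mem_filter]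
  constructor
  · rintro ⟨hyS, hy⟩
    refine ⟨hyS, exists_dvd_mem_maximalDvd (fun z hz => hpos z (mem_filter.1 hz).1) ?_⟩
    exact mem_filter.2 ⟨hyS, hy⟩
  · rintro ⟨hyS, m, hm, hym⟩
    obtain ⟨hmS, hmx, hmlt⟩ := mem_filter.1 (maximalDvd_subset hm)
    exact ⟨hyS, hym.trans hmx, (Nat.le_of_dvd (hpos m hmS) hym).trans_lt hmlt⟩

theorem gcd_mem_filter_dvd_lt {S : Finset ℕ} (hpos : ∀ a ∈ S, 0 < a)
    (hgcd : ∀ a ∈ S, ∀ b ∈ S, Nat.gcd a b ∈ S) {x c d : ℕ}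
    (hc : c ∈ S.filter fun y => y ∣ x ∧ y < x) (hd : d ∈ S.filter fun y => y ∣ x ∧ y < x) :
    Nat.gcd c d ∈ S.filter fun y => y ∣ x ∧ y < x := by
  obtain ⟨hcS, hcx, hclt⟩ := mem_filter.1 hc
  exact mem_filter.2 ⟨hgcd c hcS d (mem_filter.1 hd).1, (Nat.gcd_dvd_left c d).trans hcx,
    (Nat.gcd_le_left d (hpos c hcS)).trans_lt hclt⟩

theorem moebiusInv_inv_ne_zero {S : Finset ℕ} (hpos : ∀ a ∈ S, 0 < a)
    (hgcd : ∀ a ∈ S, ∀ b ∈ S, Nat.gcd a b ∈ S) (hcard : S.card ≤ 5) {x : ℕ} (hx : x ∈ S) :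
    moebiusInv S (fun n => (n : ℚ)⁻¹) x ≠ 0 := by
  rw [moebiusInv_eq_sub_sum_dvd_maximalDvd hpos]
  set P := S.filter fun y => y ∣ x ∧ y < x
  set M := maximalDvd P
  have hPS : P ⊆ S := filter_subset _ _
  have hPgcd : ∀ c ∈ P, ∀ d ∈ P, Nat.gcd c d ∈ P := fun c hc d hd =>
    gcd_mem_filter_dvd_lt hpos hgcd hc hd
  have hPcard : P.card < S.card :=
    card_lt_card ((ssubset_iff_of_subset hPS).2 ⟨x, hx, by simp [P]⟩)
  have hMS : ∀ c ∈ M, c ∈ S := fun c hc => hPS (maximalDvd_subset hc)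
  have hMpos : ∀ c ∈ M, 0 < c := fun c hc => hpos c (hMS c hc)
  have hxpos : (0 : ℚ) < (x : ℚ)⁻¹ := by have := hpos x hx; positivity
  obtain h | h | h | h : M.card = 0 ∨ M.card = 1 ∨ M.card = 2 ∨ M.card = 3 := by
    have : 1 < M.card → M.card < P.card := card_maximalDvd_lt hPgcd
    omega
  · simpa [card_eq_zero.1 h] using hxpos.ne'
  · obtain ⟨c, hM⟩ := card_eq_one.1 h
    have hc : c ∈ M := by simp [hM]
    simp only [hM, mem_singleton, exists_eq_left]
    rw [sum_moebiusInv_dvd _ _ (hMS c hc) (hMpos c hc), sub_ne_zero]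
    refine (inv_strictAnti₀ (by exact_mod_cast hMpos c hc) ?_).ne
    exact_mod_cast (mem_filter.1 (maximalDvd_subset hc)).2.2
  · obtain ⟨c, d, hcd, hM⟩ := card_eq_two.1 h
    have hc : c ∈ M := by simp [hM]
    have hd : d ∈ M := by simp [hM]
    simp only [hM, mem_insert, mem_singleton, exists_eq_or_imp, exists_eq_left]
    rw [sum_moebiusInv_dvd_or_dvd hpos hgcd (hMS c hc) (hMS d hd)]
    have hg := gcd_notMem_maximalDvd hc hd hcd
    have := inv_add_inv_lt_inv_gcd (hMpos c hc) (hMpos d hd) hcd (by grind) (by grind)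
    exact (by linarith : (0 : ℚ) < _).ne'
  · obtain ⟨c, d, e, hcd, hce, hde, hM⟩ := card_eq_three.1 h
    have hc : c ∈ M := by simp [hM]
    have hd : d ∈ M := by simp [hM]
    have he : e ∈ M := by simp [hM]
    simp only [hM, mem_insert, mem_singleton, exists_eq_or_imp, exists_eq_left]
    rw [sum_moebiusInv_dvd_or_dvd_or_dvd hpos hgcd (hMS c hc) (hMS d hd) (hMS e he)]
    have hPM : P.card ≤ M.card + 1 := by omega
    have hce' := gcd_eq_gcd_of_card_le_card_maximalDvd_add_one hPgcd hPM hc hd he hcd hce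
    have hde' := gcd_eq_gcd_of_card_le_card_maximalDvd_add_one hPgcd hPM hd hc he hcd.symm hde
    rw [Nat.gcd_comm d c] at hde'
    set a := Nat.gcd c d
    have hae : a ∣ e := hde' ▸ Nat.gcd_dvd_right d e
    rw [hce', hde', Nat.gcd_eq_left hae]
    have ha := gcd_notMem_maximalDvd hc hd hcd
    have := inv_add_inv_add_inv_lt_two_mul_inv (hMpos c hc) (hMpos d hd) (hMpos e he)
      (Nat.gcd_dvd_left c d) (Nat.gcd_dvd_right c d) hae (by grind) (by grind) (by grind)
    exact (by linarith : (0 : ℚ) < _).ne'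

/-- If `S` is a gcd-closed set of distinct positive integers with at most 5
elements, then the LCM matrix `[S]` is invertible. -/
theorem lcmMatrix_gcdClosed_card_le_five_isUnit
    (S : Finset ℕ) (hpos : ∀ a ∈ S, 0 < a)
    (hgcd : ∀ a ∈ S, ∀ b ∈ S, Nat.gcd a b ∈ S)
    (hcard : S.card ≤ 5) :
    IsUnit (Matrix.of fun i j : ↥S => (Nat.lcm (i : ℕ) (j : ℕ) : ℚ)) := by
  have hdiag : IsUnit (diagonal fun i : S => (i : ℚ)) :=
    isUnit_diagonal.2 (Pi.isUnit_iff.2 fun i => (Nat.cast_ne_zero.2 (hpos i i.2).ne').isUnit)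
  have hinvGcd : IsUnit (of fun i j : S => ((Nat.gcd i j : ℕ) : ℚ)⁻¹) :=
    isUnit_gcdMatrix hpos hgcd fun x hx => (moebiusInv_inv_ne_zero hpos hgcd hcard hx).isUnit
  rw [lcmMatrix_eq_diagonal_mul_inv_gcdMatrix_mul_diagonal]
  exact (hdiag.mul hinvGcd).mul hdiag
end

section
/- (Corollary 4.5, second part) If S is a gcd-closed set of distinct positive integers with exactly 7 elements, then the LCM matrix [S] is invertible. -/
/-!
Write `[S] = D · (1 / gcd(x_i, x_j)) · D` with `D = diag(x_i)`. Since `S` is gcd-closed, the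
reciprocal GCD matrix factors as `E · diag(α) · Eᵀ`, where `E` is the unitriangular divisibility
matrix of `S` and `α` is the Möbius inversion of `n ↦ 1/n` over `(S, ∣)`; so it suffices that no
`α(x)` vanishes. Inclusion–exclusion over the maximal proper divisors `M` of `x` in `S` gives
`α(x) = ∑_{T ⊆ M} (-1)^|T| / gcd(x, T)`. The gcds of `x` with two or more elements of `M` form a
set `V ⊆ S` disjoint from `M ∪ {x}`, so `|M| + |V| ≤ 6`. Hence `|M| ≤ 1`, or `V` has at most two
values (which then form a divisor chain), or `|M| = 3` and `|V| ≤ 3`; in each case the sum has a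
definite sign, because every element of `M` is at least twice each of its proper divisors.
-/

open Finset

namespace LcmMatrix

variable {S : Finset ℕ}

section DivisibilityMatrix

open Matrix

def divisibilityMatrix (S : Finset ℕ) (R : Type*) [Zero R] [One R] : Matrix S S R :=
  of fun i j => if (j : ℕ) ∣ i then 1 else 0

theorem det_divisibilityMatrix {R : Type*} [CommRing R] (hpos : ∀ a ∈ S, 0 < a) :
    (divisibilityMatrix S R).det = 1 := by
  have htri : (divisibilityMatrix S R).IsLowerTriangular := fun i j hij => by
    simp only [divisibilityMatrix, of_apply, ite_eq_right_iff]
    exact fun hdvd => absurd (Nat.le_of_dvd (hpos _ i.2) hdvd) (not_le.2 hij)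
  rw [det_of_isLowerTriangular _ htri]
  exact prod_eq_one fun i _ => by simp [divisibilityMatrix]

theorem exists_sum_dvd_eq {R : Type*} [CommRing R] (hpos : ∀ a ∈ S, 0 < a) (f : ℕ → R) :
    ∃ α : S → R, ∀ m ∈ S, ∑ k : S, (if (k : ℕ) ∣ m then α k else 0) = f m := by
  set E := divisibilityMatrix S R
  have hE : E * E⁻¹ = 1 :=
    mul_nonsing_inv E (by rw [det_divisibilityMatrix hpos]; exact isUnit_one)
  refine ⟨E⁻¹ *ᵥ fun i => f i, fun m hm => ?_⟩
  have h := congrFun (show E *ᵥ (E⁻¹ *ᵥ fun i : S => f i) = fun i : S => f i by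
    rw [mulVec_mulVec, hE, one_mulVec]) ⟨m, hm⟩
  simpa only [mulVec, dotProduct, E, divisibilityMatrix, of_apply, ite_mul, one_mul, zero_mul]
    using h

theorem gcdMatrix_eq_mul_diagonal_mul_transpose {R : Type*} [CommSemiring R]
    (hgcd : ∀ a ∈ S, ∀ b ∈ S, Nat.gcd a b ∈ S) {f : ℕ → R} {α : S → R}
    (hα : ∀ m ∈ S, ∑ k : S, (if (k : ℕ) ∣ m then α k else 0) = f m) :
    of (fun i j : S => f (Nat.gcd i j)) =
      divisibilityMatrix S R * diagonal α * (divisibilityMatrix S R)ᵀ := by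
  ext i j
  rw [of_apply, ← hα _ (hgcd _ i.2 _ j.2), mul_apply]
  refine sum_congr rfl fun k _ => ?_
  rw [mul_diagonal, transpose_apply]
  by_cases hi : (k : ℕ) ∣ i <;> by_cases hj : (k : ℕ) ∣ j <;>
    simp [divisibilityMatrix, hi, hj, Nat.dvd_gcd_iff]

theorem lcmMatrix_eq_diagonal_mul_mul_diagonal {K : Type*} [Field K] [CharZero K]
    (hpos : ∀ a ∈ S, 0 < a) :
    of (fun i j : S => (Nat.lcm i j : K)) =
      diagonal (fun i : S => (i : K)) * of (fun i j : S => ((Nat.gcd i j : ℕ) : K)⁻¹) *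
        diagonal (fun i : S => (i : K)) := by
  ext i j
  have hg : (Nat.gcd i j : K) ≠ 0 :=
    Nat.cast_ne_zero.2 (Nat.gcd_pos_of_pos_left _ (hpos _ i.2)).ne'
  have hgl : (Nat.gcd i j : K) * Nat.lcm i j = i * j := by exact_mod_cast Nat.gcd_mul_lcm i j
  simp only [mul_diagonal, diagonal_mul, of_apply]
  field_simp
  linear_combination hgl

theorem isUnit_lcmMatrix {K : Type*} [Field K] [CharZero K] (hpos : ∀ a ∈ S, 0 < a)
    (hgcd : ∀ a ∈ S, ∀ b ∈ S, Nat.gcd a b ∈ S) {α : S → K}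
    (hα : ∀ m ∈ S, ∑ k : S, (if (k : ℕ) ∣ m then α k else 0) = (m : K)⁻¹)
    (hne : ∀ k, α k ≠ 0) :
    IsUnit (of fun i j : S => (Nat.lcm i j : K)) := by
  have hE : IsUnit (divisibilityMatrix S K) := by
    rw [isUnit_iff_isUnit_det, det_divisibilityMatrix hpos]
    exact isUnit_one
  have hD : IsUnit (diagonal fun i : S => (i : K)) := isUnit_diagonal.2 <|
    Pi.isUnit_iff.2 fun i => isUnit_iff_ne_zero.2 (Nat.cast_ne_zero.2 (hpos _ i.2).ne')
  have hA : IsUnit (diagonal α) :=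
    isUnit_diagonal.2 (Pi.isUnit_iff.2 fun k => isUnit_iff_ne_zero.2 (hne k))
  rw [lcmMatrix_eq_diagonal_mul_mul_diagonal hpos,
    gcdMatrix_eq_mul_diagonal_mul_transpose hgcd (f := fun n => (n : K)⁻¹) hα]
  exact (hD.mul ((hE.mul hA).mul ((isUnit_transpose _).2 hE))).mul hD

end DivisibilityMatrix

theorem sum_powerset_neg_one_pow_card_eq_ite {R ι : Type*} [Ring R] [DecidableEq ι] (s : Finset ι) :
    ∑ T ∈ s.powerset, (-1 : R) ^ #T = if s = ∅ then 1 else 0 := by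
  simpa using congrArg (Int.cast : ℤ → R) (sum_powerset_neg_one_pow_card (x := s))

theorem exists_subset_pair_of_card_le_two {ι : Type*} [DecidableEq ι] {s : Finset ι} {v : ι}
    (hs : #s ≤ 2) (hv : v ∈ s) : ∃ u ∈ s, s ⊆ {u, v} := by
  by_cases h : ∃ u ∈ s, u ≠ v
  · obtain ⟨u, hu, huv⟩ := h
    refine ⟨u, hu, (eq_of_subset_of_card_le (insert_subset hu (singleton_subset_iff.2 hv)) ?_).ge⟩
    rw [card_pair huv]
    exact hs
  · push Not at h
    exact ⟨v, hv, fun w hw => by simp [h w hw]⟩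

theorem sum_powerset_eq_add_sum_singleton_add {ι M : Type*} [DecidableEq ι] [AddCommMonoid M]
    (s : Finset ι) (g : Finset ι → M) :
    ∑ T ∈ s.powerset, g T = g ∅ + ∑ y ∈ s, g {y} + ∑ T ∈ s.powerset with 2 ≤ #T, g T := by
  rw [← sum_filter_add_sum_filter_not s.powerset (fun T => #T ≤ 1)]
  have hsmall : {T ∈ s.powerset | #T ≤ 1} = insert ∅ (s.map ⟨singleton, singleton_injective⟩) := by
    ext T
    simp only [mem_filter, mem_powerset, mem_insert, mem_map, Function.Embedding.coeFn_mk]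
    constructor
    · rintro ⟨hTs, hT⟩
      rcases Nat.le_one_iff_eq_zero_or_eq_one.1 hT with h | h
      · exact Or.inl (card_eq_zero.1 h)
      · obtain ⟨y, rfl⟩ := card_eq_one.1 h
        exact Or.inr ⟨y, singleton_subset_iff.1 hTs, rfl⟩
    · rintro (rfl | ⟨y, hy, rfl⟩)
      · simp
      · simpa using hy
  rw [hsmall, sum_insert (by simp), sum_map]
  simp only [Function.Embedding.coeFn_mk, not_le, Nat.lt_iff_add_one_le]

theorem sum_powerset_filter_two_le_card_neg_one_pow {ι R : Type*} [DecidableEq ι] [CommRing R]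
    {s : Finset ι} (hs : s.Nonempty) :
    ∑ T ∈ s.powerset with 2 ≤ #T, (-1 : R) ^ #T = #s - 1 := by
  have h := sum_powerset_eq_add_sum_singleton_add s fun T => (-1 : R) ^ #T
  rw [sum_powerset_neg_one_pow_card_eq_ite, if_neg hs.ne_empty] at h
  simp only [card_empty, pow_zero, card_singleton, pow_one, sum_const, nsmul_eq_mul, mul_neg,
    mul_one] at h
  linear_combination -h

theorem powerset_filter_forall_mem {ι : Type*} [DecidableEq ι] (M : Finset ι) (p : ι → Prop)
    [DecidablePred p] : {T ∈ M.powerset | ∀ y ∈ T, p y} = {y ∈ M | p y}.powerset := by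
  ext T
  simp only [mem_filter, mem_powerset, subset_iff]
  grind

def gcdWith (x : ℕ) (T : Finset ℕ) : ℕ := (insert x T).gcd id

section GcdWith

variable {x : ℕ}

@[simp]
theorem gcdWith_empty (x : ℕ) : gcdWith x ∅ = x := by simp [gcdWith]

theorem dvd_gcdWith_iff {d : ℕ} {T : Finset ℕ} : d ∣ gcdWith x T ↔ d ∣ x ∧ ∀ y ∈ T, d ∣ y := by
  simp only [gcdWith, Finset.dvd_gcd_iff, forall_mem_insert, id]

theorem gcdWith_dvd_left (x : ℕ) (T : Finset ℕ) : gcdWith x T ∣ x :=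
  Finset.gcd_dvd (mem_insert_self x T)

theorem gcdWith_dvd_of_mem {T : Finset ℕ} {y : ℕ} (hy : y ∈ T) : gcdWith x T ∣ y :=
  Finset.gcd_dvd (mem_insert_of_mem hy)

theorem gcdWith_dvd_gcdWith {T₁ T₂ : Finset ℕ} (h : T₁ ⊆ T₂) : gcdWith x T₂ ∣ gcdWith x T₁ :=
  gcd_mono (insert_subset_insert x h)

theorem gcdWith_singleton {y : ℕ} (hy : y ∣ x) : gcdWith x {y} = y := by
  simp only [gcdWith, gcd_insert, gcd_singleton, id, normalize_eq]
  exact Nat.gcd_eq_right hy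

theorem gcdWith_pos (hx : 0 < x) (T : Finset ℕ) : 0 < gcdWith x T :=
  Nat.pos_of_dvd_of_pos (gcdWith_dvd_left x T) hx

theorem gcdWith_union_of_eq {T₁ T₂ : Finset ℕ} (h : gcdWith x T₁ = gcdWith x T₂) :
    gcdWith x (T₁ ∪ T₂) = gcdWith x T₁ := by
  rw [gcdWith, insert_union_distrib, gcd_union, ← gcdWith, ← gcdWith, h]
  exact Nat.gcd_self _

theorem gcdWith_mem (hgcd : ∀ a ∈ S, ∀ b ∈ S, Nat.gcd a b ∈ S) (hx : x ∈ S) {T : Finset ℕ}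
    (hT : T ⊆ S) : gcdWith x T ∈ S := by
  induction T using Finset.induction_on with
  | empty => simpa using hx
  | insert a T _ ih =>
    rw [gcdWith, insert_comm, gcd_insert]
    exact hgcd _ (hT (mem_insert_self a T)) _ (ih ((subset_insert a T).trans hT))

end GcdWith

theorem eq_sum_powerset_gcdWith {R : Type*} [CommRing R] {f : ℕ → R} {α : S → R}
    (hα : ∀ m ∈ S, ∑ k : S, (if (k : ℕ) ∣ m then α k else 0) = f m)
    {x : ℕ} (hx : x ∈ S) (hx0 : 0 < x) {M : Finset ℕ} (hM : M ⊆ x.properDivisors)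
    (hMS : ∀ T ⊆ M, gcdWith x T ∈ S)
    (hcover : ∀ k ∈ S, k ∈ x.properDivisors → ∃ y ∈ M, k ∣ y) :
    α ⟨x, hx⟩ = ∑ T ∈ M.powerset, (-1) ^ #T * f (gcdWith x T) := by
  have hinner : ∀ k : S, ∑ T ∈ M.powerset, (-1) ^ #T * (if (k : ℕ) ∣ gcdWith x T
      then α k else 0) = if k = ⟨x, hx⟩ then α k else 0 := by
    intro k
    simp_rw [mul_ite, mul_zero]
    rw [← sum_filter]
    by_cases hkx : (k : ℕ) ∣ x
    · have hfilter : {T ∈ M.powerset | (k : ℕ) ∣ gcdWith x T} =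
          {y ∈ M | (k : ℕ) ∣ y}.powerset := by
        simp only [dvd_gcdWith_iff, hkx, true_and]
        exact powerset_filter_forall_mem M _
      have hempty : {y ∈ M | (k : ℕ) ∣ y} = ∅ ↔ k = ⟨x, hx⟩ := by
        rw [filter_eq_empty_iff, Subtype.ext_iff]
        constructor
        · intro h
          by_contra hne
          obtain ⟨y, hy, hky⟩ := hcover k k.2 (Nat.mem_properDivisors.2
            ⟨hkx, lt_of_le_of_ne (Nat.le_of_dvd hx0 hkx) hne⟩)
          exact h hy hky
        · rintro h y hy hky
          have hyx := (Nat.mem_properDivisors.1 (hM hy)).2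
          have hky' := Nat.le_of_dvd (Nat.pos_of_mem_properDivisors (hM hy)) hky
          simp only at h
          omega
      rw [hfilter, ← sum_mul, sum_powerset_neg_one_pow_card_eq_ite]
      simp only [hempty, ite_mul, one_mul, zero_mul]
    · have hfilter : {T ∈ M.powerset | (k : ℕ) ∣ gcdWith x T} = ∅ :=
        filter_eq_empty_iff.2 fun T _ h => hkx (h.trans (gcdWith_dvd_left x T))
      rw [hfilter, sum_empty, if_neg (by rintro rfl; exact hkx dvd_rfl)]
  calc α ⟨x, hx⟩ = ∑ k : S, if k = ⟨x, hx⟩ then α k else 0 := (Fintype.sum_ite_eq' _ _).symm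
    _ = ∑ k : S, ∑ T ∈ M.powerset, (-1) ^ #T * (if (k : ℕ) ∣ gcdWith x T
          then α k else 0) := by simp_rw [hinner]
    _ = ∑ T ∈ M.powerset, (-1) ^ #T * f (gcdWith x T) := by
        rw [sum_comm]
        refine sum_congr rfl fun T hT => ?_
        rw [← mul_sum, hα _ (hMS T (mem_powerset.1 hT))]

def maxProperDivisors (S : Finset ℕ) (x : ℕ) : Finset ℕ :=
  {y ∈ S ∩ x.properDivisors | ∀ z ∈ S ∩ x.properDivisors, y ∣ z → z = y}

section MaxProperDivisors

variable {x : ℕ}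

theorem maxProperDivisors_subset : maxProperDivisors S x ⊆ S ∩ x.properDivisors :=
  filter_subset _ _

theorem isAntichain_maxProperDivisors : IsAntichain (· ∣ ·) (maxProperDivisors S x : Set ℕ) :=
  fun _ hy z hz hne hyz => hne ((mem_filter.1 hy).2 z (mem_filter.1 hz).1 hyz).symm

theorem exists_mem_maxProperDivisors_dvd {k : ℕ} (hk : k ∈ S ∩ x.properDivisors) :
    ∃ y ∈ maxProperDivisors S x, k ∣ y := by
  set B := {z ∈ S ∩ x.properDivisors | k ∣ z}
  have hB : B.Nonempty := ⟨k, mem_filter.2 ⟨hk, dvd_rfl⟩⟩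
  obtain ⟨hyS, hky⟩ := mem_filter.1 (B.max'_mem hB)
  refine ⟨B.max' hB, mem_filter.2 ⟨hyS, fun z hz hyz => ?_⟩, hky⟩
  have h1 : z ≤ B.max' hB := B.le_max' z (mem_filter.2 ⟨hz, hky.trans hyz⟩)
  have h2 := Nat.le_of_dvd (Nat.pos_of_mem_properDivisors (mem_inter.1 hz).2) hyz
  omega

end MaxProperDivisors

def jointGcds (x : ℕ) (M : Finset ℕ) : Finset ℕ :=
  {T ∈ M.powerset | 2 ≤ #T}.image (gcdWith x)

section Antichain

variable {x : ℕ} {M : Finset ℕ}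

theorem gcdWith_ne_of_two_le_card (hM : M ⊆ x.properDivisors)
    (hanti : IsAntichain (· ∣ ·) (M : Set ℕ)) {T : Finset ℕ} (hT : T ⊆ M) (h2 : 2 ≤ #T) {y : ℕ}
    (hy : y ∈ insert x M) : gcdWith x T ≠ y := by
  obtain ⟨z, hzT, hzy⟩ := exists_mem_ne (s := T) (by omega) y
  intro hGy
  have hyz : y ∣ z := hGy ▸ gcdWith_dvd_of_mem hzT
  have hz := hM (hT hzT)
  rcases mem_insert.1 hy with rfl | hyM
  · exact absurd (Nat.le_of_dvd (Nat.pos_of_mem_properDivisors hz) hyz)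
      (not_le.2 (Nat.mem_properDivisors.1 hz).2)
  · exact hanti hyM (hT hzT) hzy.symm hyz

theorem card_maxProperDivisors_add_card_jointGcds_lt (hgcd : ∀ a ∈ S, ∀ b ∈ S, Nat.gcd a b ∈ S)
    (hx : x ∈ S) : #(maxProperDivisors S x) + #(jointGcds x (maxProperDivisors S x)) < #S := by
  set M := maxProperDivisors S x
  have hM := maxProperDivisors_subset (S := S) (x := x)
  have hxM : x ∉ M := fun h => by simpa using (hM h)
  have hV : ∀ v ∈ jointGcds x M, v ∈ S ∧ v ∉ insert x M := by
    intro v hv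
    obtain ⟨T, hT, rfl⟩ := mem_image.1 hv
    rw [mem_filter, mem_powerset] at hT
    exact ⟨gcdWith_mem hgcd hx ((hT.1.trans hM).trans inter_subset_left),
      fun h => gcdWith_ne_of_two_le_card (hM.trans inter_subset_right)
        isAntichain_maxProperDivisors hT.1 hT.2 h rfl⟩
  have hdisj : Disjoint (insert x M) (jointGcds x M) :=
    disjoint_right.2 fun v hv => (hV v hv).2
  have hsub : insert x M ∪ jointGcds x M ⊆ S := union_subset
    (insert_subset hx (hM.trans inter_subset_left)) fun v hv => (hV v hv).1
  have := card_le_card hsub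
  rw [card_union_of_disjoint hdisj, card_insert_of_notMem hxM] at this
  omega

theorem exists_eq_triple_gcdWith_eq (hM3 : #M = 3) (hV : #(jointGcds x M) ≤ 3) :
    ∃ a b c, a ≠ b ∧ a ≠ c ∧ b ≠ c ∧ M = {a, b, c} ∧ gcdWith x M = gcdWith x {a, b} := by
  obtain ⟨a, b, c, hab, hac, hbc, rfl⟩ := card_eq_three.1 hM3
  have hmemV : ∀ T ⊆ ({a, b, c} : Finset ℕ), 2 ≤ #T → gcdWith x T ∈ jointGcds x {a, b, c} :=
    fun T hT h2 => mem_image_of_mem _ (mem_filter.2 ⟨mem_powerset.2 hT, h2⟩)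
  set P : Finset ℕ := {gcdWith x {a, b}, gcdWith x {a, c}, gcdWith x {b, c}}
  -- Four subsets of size `≥ 2` share at most three gcd values, and two pairs with the same gcd
  -- force the gcd of their union `{a, b, c}` to be that value too.
  have hmem : gcdWith x {a, b, c} ∈ P := by
    by_contra hnot
    have hne : ∀ T₁ T₂ : Finset ℕ, T₁ ∪ T₂ = {a, b, c} → gcdWith x T₁ ∈ P →
        gcdWith x T₁ ≠ gcdWith x T₂ := by
      rintro T₁ T₂ h₁₂ hP h
      rw [← h₁₂, gcdWith_union_of_eq h] at hnot
      exact hnot hP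
    have h1 := hne {a, b} {a, c}
      (by ext y; simp only [mem_union, mem_insert, mem_singleton]; omega) (by simp [P])
    have h2 := hne {a, b} {b, c}
      (by ext y; simp only [mem_union, mem_insert, mem_singleton]; omega) (by simp [P])
    have h3 := hne {a, c} {b, c}
      (by ext y; simp only [mem_union, mem_insert, mem_singleton]; omega) (by simp [P])
    have hsub : insert (gcdWith x {a, b, c}) P ⊆ jointGcds x {a, b, c} := by
      refine insert_subset (hmemV _ subset_rfl (by omega)) (insert_subset ?_ (insert_subset ?_ ?_))
      · exact hmemV _ (by intro y hy; simp only [mem_insert, mem_singleton] at hy ⊢; omega)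
          (card_pair hab).ge
      · exact hmemV _ (by intro y hy; simp only [mem_insert, mem_singleton] at hy ⊢; omega)
          (card_pair hac).ge
      · exact singleton_subset_iff.2 (hmemV _
          (by intro y hy; simp only [mem_insert, mem_singleton] at hy ⊢; omega) (card_pair hbc).ge)
    have := card_le_card hsub
    rw [card_insert_of_notMem hnot, card_insert_of_notMem (by simp [h1, h2]), card_pair h3] at this
    omega
  simp only [P, mem_insert, mem_singleton] at hmem
  rcases hmem with h | h | h
  · exact ⟨a, b, c, hab, hac, hbc, rfl, h⟩
  · exact ⟨a, c, b, hac, hab, hbc.symm, by rw [pair_comm], h⟩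
  · exact ⟨b, c, a, hbc, hab.symm, hac.symm, by rw [insert_comm a b, pair_comm a c], h⟩

end Antichain

theorem sum_powerset_inv_gcdWith_eq {K : Type*} [Field K] {x : ℕ} {M : Finset ℕ}
    (hM : M ⊆ x.properDivisors) :
    ∑ T ∈ M.powerset, (-1 : K) ^ #T * (gcdWith x T : K)⁻¹ =
      (x : K)⁻¹ - ∑ y ∈ M, (y : K)⁻¹ +
        ∑ T ∈ M.powerset with 2 ≤ #T, (-1) ^ #T * (gcdWith x T : K)⁻¹ := by
  rw [sum_powerset_eq_add_sum_singleton_add]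
  have hsingle : ∀ y ∈ M, (gcdWith x {y} : K)⁻¹ = (y : K)⁻¹ := fun y hy => by
    rw [gcdWith_singleton (Nat.mem_properDivisors.1 (hM hy)).1]
  simp [sum_congr rfl hsingle, sub_eq_add_neg]

section OrderedField

variable {K : Type*} [Field K] [LinearOrder K] [IsStrictOrderedRing K]

theorem sum_le_sum_powerset_of_two_level {ι : Type*} [DecidableEq ι] {M I : Finset ι}
    (hIM : I ⊆ M) (hI : 2 ≤ #I) {w : ι → K} {g : Finset ι → K} {p q : K} (hp : 0 ≤ p)
    (hq : 0 ≤ q) (hwI : ∀ y ∈ I, w y ≤ p / 2) (hwM : ∀ y ∈ M, w y ≤ q / 2)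
    (hg : ∀ T ⊆ M, 2 ≤ #T → g T = if T ⊆ I then p else q) :
    ∑ y ∈ M, w y ≤ ∑ T ∈ M.powerset with 2 ≤ #T, (-1) ^ #T * g T := by
  have hIne : I.Nonempty := card_pos.1 (by omega)
  have hsubI : {T ∈ {T ∈ M.powerset | 2 ≤ #T} | T ⊆ I} = {T ∈ I.powerset | 2 ≤ #T} := by
    ext T
    simp only [mem_filter, mem_powerset]
    exact ⟨fun h => ⟨h.2, h.1.2⟩, fun h => ⟨⟨h.1.trans hIM, h.2⟩, h.1⟩⟩
  have hsumI := sum_powerset_filter_two_le_card_neg_one_pow (R := K) hIne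
  have hsumM := sum_powerset_filter_two_le_card_neg_one_pow (R := K) (hIne.mono hIM)
  rw [← sum_filter_add_sum_filter_not _ (· ⊆ I), hsubI] at hsumM
  have hrhs : ∑ T ∈ M.powerset with 2 ≤ #T, (-1) ^ #T * g T
      = (#I - 1) * p + (#M - #I) * q := by
    rw [← sum_filter_add_sum_filter_not _ (· ⊆ I), hsubI]
    have hpI : ∀ T ∈ {T ∈ I.powerset | 2 ≤ #T}, (-1) ^ #T * g T = (-1) ^ #T * p := by
      intro T hT
      simp only [mem_filter, mem_powerset] at hT
      rw [hg T (hT.1.trans hIM) hT.2, if_pos hT.1]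
    have hqM : ∀ T ∈ {T ∈ {T ∈ M.powerset | 2 ≤ #T} | ¬T ⊆ I}, (-1) ^ #T * g T = (-1) ^ #T * q := by
      intro T hT
      simp only [mem_filter, mem_powerset] at hT
      rw [hg T hT.1.1 hT.1.2, if_neg hT.2]
    rw [sum_congr rfl hpI, sum_congr rfl hqM, ← sum_mul, ← sum_mul, hsumI]
    linear_combination q * hsumM - q * hsumI
  have hlhs : ∑ y ∈ M, w y ≤ #I * (p / 2) + (#M - #I) * (q / 2) := by
    rw [← sum_filter_add_sum_filter_not M (· ∈ I), filter_mem_eq_inter, inter_eq_right.2 hIM]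
    have hcard : (#{y ∈ M | y ∉ I} : K) = #M - #I := by
      rw [filter_not, filter_mem_eq_inter, inter_eq_right.2 hIM, card_sdiff_of_subset hIM,
        Nat.cast_sub (card_le_card hIM)]
    rw [← hcard]
    gcongr
    · simpa only [nsmul_eq_mul] using sum_le_card_nsmul I w _ hwI
    · simpa only [nsmul_eq_mul] using
        sum_le_card_nsmul _ w _ fun y hy => hwM y (mem_filter.1 hy).1
  have hI2 : (2 : K) ≤ #I := by exact_mod_cast hI
  have hIM' : (#I : K) ≤ #M := by exact_mod_cast card_le_card hIM
  nlinarith [mul_nonneg (sub_nonneg.2 hI2) hp, mul_nonneg (sub_nonneg.2 hIM') hq]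

theorem sum_powerset_triple_pos {ι : Type*} [DecidableEq ι] {a b c : ι} (hab : a ≠ b)
    (hac : a ≠ c) (hbc : b ≠ c) {g : Finset ι → K} (hempty : 0 < g ∅)
    (htop : g {a, b, c} = g {a, b}) (hgac : 0 ≤ g {a, c}) (ha : g {a} ≤ g {a, c} / 2)
    (hb : g {b} ≤ g {b, c} / 2) (hc : g {c} ≤ g {b, c} / 2) :
    0 < ∑ T ∈ ({a, b, c} : Finset ι).powerset, (-1) ^ #T * g T := by
  have hexpand : ∑ T ∈ ({a, b, c} : Finset ι).powerset, (-1) ^ #T * g T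
      = g ∅ - g {a} - g {b} - g {c} + g {a, b} + g {a, c} + g {b, c} - g {a, b, c} := by
    have hpow : ({c} : Finset ι).powerset = {∅, {c}} := by
      rw [← insert_empty_eq c, powerset_insert, powerset_empty]
      rfl
    simp [sum_powerset_insert, hab, hac, hbc, hpow]
    ring
  rw [hexpand, htop]
  linarith

theorem inv_le_inv_div_two_of_dvd {v y : ℕ} (hv : 0 < v) (hvy : v ∣ y) (hne : v ≠ y) :
    (y : K)⁻¹ ≤ (v : K)⁻¹ / 2 := by
  obtain ⟨k, rfl⟩ := hvy
  rcases k with _ | _ | k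
  · rw [mul_zero, Nat.cast_zero, inv_zero]
    positivity
  · simp at hne
  · have hv' : (0 : K) < v := by exact_mod_cast hv
    rw [Nat.cast_mul, mul_inv, div_eq_mul_inv]
    gcongr
    push_cast
    linarith [(Nat.cast_nonneg k : (0 : K) ≤ k)]

variable {x : ℕ} {M : Finset ℕ}

theorem sum_powerset_inv_gcdWith_pos_of_card_jointGcds_le_two (hx : 0 < x)
    (hM : M ⊆ x.properDivisors) (hanti : IsAntichain (· ∣ ·) (M : Set ℕ)) (hM2 : 2 ≤ #M)
    (hV : #(jointGcds x M) ≤ 2) :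
    0 < ∑ T ∈ M.powerset, (-1 : K) ^ #T * (gcdWith x T : K)⁻¹ := by
  have hvV : gcdWith x M ∈ jointGcds x M :=
    mem_image_of_mem _ (mem_filter.2 ⟨mem_powerset_self M, hM2⟩)
  obtain ⟨u, huV, hVuv⟩ := exists_subset_pair_of_card_le_two hV hvV
  obtain ⟨Tu, hTu, rfl⟩ := mem_image.1 huV
  rw [mem_filter, mem_powerset] at hTu
  have htwo : ∀ T ⊆ M, 2 ≤ #T → gcdWith x T = gcdWith x Tu ∨ gcdWith x T = gcdWith x M :=
    fun T hT h2 => by simpa using hVuv (mem_image_of_mem _ (mem_filter.2 ⟨mem_powerset.2 hT, h2⟩))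
  set I := {y ∈ M | gcdWith x Tu ∣ y}
  have hTuI : Tu ⊆ I := fun y hy => mem_filter.2 ⟨hTu.1 hy, gcdWith_dvd_of_mem hy⟩
  -- `gcdWith x M` divides `gcdWith x Tu`, so the two values can only be told apart on `I`.
  have hlevel : ∀ T ⊆ M, 2 ≤ #T → (gcdWith x T : K)⁻¹ =
      if T ⊆ I then (gcdWith x Tu : K)⁻¹ else (gcdWith x M : K)⁻¹ := by
    intro T hT h2
    split_ifs with hTI
    · have hdvd : gcdWith x Tu ∣ gcdWith x T :=
        dvd_gcdWith_iff.2 ⟨gcdWith_dvd_left x Tu, fun y hy => (mem_filter.1 (hTI hy)).2⟩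
      rcases htwo T hT h2 with h | h
      · rw [h]
      · rw [h] at hdvd ⊢
        rw [Nat.dvd_antisymm hdvd (gcdWith_dvd_gcdWith hTu.1)]
    · obtain ⟨y, hyT, hyI⟩ := not_subset.1 hTI
      rcases htwo T hT h2 with h | h
      · exact absurd (mem_filter.2 ⟨hT hyT, h ▸ gcdWith_dvd_of_mem hyT⟩) hyI
      · rw [h]
  have hle := sum_le_sum_powerset_of_two_level (filter_subset _ M)
    (hTu.2.trans (card_le_card hTuI)) (w := fun y => (y : K)⁻¹) (by positivity) (by positivity)
    (fun y hy => inv_le_inv_div_two_of_dvd (gcdWith_pos hx Tu) (mem_filter.1 hy).2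
      (gcdWith_ne_of_two_le_card hM hanti hTu.1 hTu.2 (mem_insert_of_mem (mem_filter.1 hy).1)))
    (fun y hy => inv_le_inv_div_two_of_dvd (gcdWith_pos hx M) (gcdWith_dvd_of_mem hy)
      (gcdWith_ne_of_two_le_card hM hanti subset_rfl hM2 (mem_insert_of_mem hy)))
    hlevel
  rw [sum_powerset_inv_gcdWith_eq hM]
  have : (0 : K) < (x : K)⁻¹ := by positivity
  linarith

theorem sum_powerset_inv_gcdWith_pos_of_card_eq_three (hx : 0 < x)
    (hM : M ⊆ x.properDivisors) (hanti : IsAntichain (· ∣ ·) (M : Set ℕ)) (hM3 : #M = 3)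
    (hV : #(jointGcds x M) ≤ 3) :
    0 < ∑ T ∈ M.powerset, (-1 : K) ^ #T * (gcdWith x T : K)⁻¹ := by
  obtain ⟨a, b, c, hab, hac, hbc, rfl, htop⟩ := exists_eq_triple_gcdWith_eq hM3 hV
  have hsingle : ∀ y ∈ ({a, b, c} : Finset ℕ), (gcdWith x {y} : K)⁻¹ = (y : K)⁻¹ := fun y hy => by
    rw [gcdWith_singleton (Nat.mem_properDivisors.1 (hM hy)).1]
  have hhalf : ∀ y z, y ∈ ({a, b, c} : Finset ℕ) → z ∈ ({a, b, c} : Finset ℕ) → y ≠ z →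
      ∀ w ∈ ({y, z} : Finset ℕ), (gcdWith x {w} : K)⁻¹ ≤ (gcdWith x {y, z} : K)⁻¹ / 2 := by
    intro y z hy hz hyz w hw
    have hsub : ({y, z} : Finset ℕ) ⊆ {a, b, c} := insert_subset hy (singleton_subset_iff.2 hz)
    rw [hsingle w (hsub hw)]
    exact inv_le_inv_div_two_of_dvd (gcdWith_pos hx _) (gcdWith_dvd_of_mem hw)
      (gcdWith_ne_of_two_le_card hM hanti hsub (card_pair hyz).ge (mem_insert_of_mem (hsub hw)))
  apply sum_powerset_triple_pos hab hac hbc (g := fun T => (gcdWith x T : K)⁻¹)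
  · simpa using hx
  · simp only [htop]
  · positivity
  · exact hhalf a c (by simp) (by simp) hac a (by simp)
  · exact hhalf b c (by simp) (by simp) hbc b (by simp)
  · exact hhalf b c (by simp) (by simp) hbc c (by simp)

theorem sum_powerset_inv_gcdWith_ne_zero (hx : 0 < x) (hM : M ⊆ x.properDivisors)
    (hanti : IsAntichain (· ∣ ·) (M : Set ℕ)) (hcard : #M + #(jointGcds x M) ≤ 6) :
    ∑ T ∈ M.powerset, (-1 : K) ^ #T * (gcdWith x T : K)⁻¹ ≠ 0 := by
  rcases lt_or_ge #M 2 with hM2 | hM2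
  · obtain hM0 | hM1 : #M = 0 ∨ #M = 1 := by omega
    · simp [card_eq_zero.1 hM0, hx.ne']
    · obtain ⟨y, rfl⟩ := card_eq_one.1 hM1
      have hy := hM (mem_singleton_self y)
      have hxy := inv_le_inv_div_two_of_dvd (K := K) (Nat.pos_of_mem_properDivisors hy)
        (Nat.mem_properDivisors.1 hy).1 (Nat.mem_properDivisors.1 hy).2.ne
      have hy0 : (0 : K) < (y : K)⁻¹ := by simpa using Nat.pos_of_mem_properDivisors hy
      have hP2 : {T ∈ ({y} : Finset ℕ).powerset | 2 ≤ #T} = ∅ :=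
        filter_eq_empty_iff.2 fun T hT => by
          have := card_le_card (mem_powerset.1 hT)
          rw [card_singleton] at this
          omega
      rw [sum_powerset_inv_gcdWith_eq hM, hP2, sum_empty, sum_singleton]
      exact ne_of_lt (by linarith)
  by_cases hV : #(jointGcds x M) ≤ 2
  · exact (sum_powerset_inv_gcdWith_pos_of_card_jointGcds_le_two hx hM hanti hM2 hV).ne'
  -- for `#M = 2` the only subset of size `≥ 2` is `M` itself
  have hM3 : #M = 3 := by
    refine le_antisymm (by omega) (Nat.lt_of_le_of_ne hM2 fun h2 => hV ?_)
    refine card_image_le.trans (le_trans (card_le_one.2 fun T hT T' hT' => ?_) one_le_two)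
    rw [mem_filter, mem_powerset] at hT hT'
    rw [eq_of_subset_of_card_le hT.1 (by omega), eq_of_subset_of_card_le hT'.1 (by omega)]
  exact (sum_powerset_inv_gcdWith_pos_of_card_eq_three hx hM hanti hM3 (by omega)).ne'

end OrderedField

end LcmMatrix

open LcmMatrix in
/-- If `S` is a gcd-closed set of distinct positive integers with exactly 7
elements, then the LCM matrix `[S]` is invertible. -/
theorem lcmMatrix_gcdClosed_card_eq_seven_isUnit
    (S : Finset ℕ) (hpos : ∀ a ∈ S, 0 < a)
    (hgcd : ∀ a ∈ S, ∀ b ∈ S, Nat.gcd a b ∈ S)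
    (hcard : S.card = 7) :
    IsUnit (Matrix.of fun i j : ↥S => (Nat.lcm (i : ℕ) (j : ℕ) : ℚ)) := by
  obtain ⟨α, hα⟩ := exists_sum_dvd_eq hpos fun n : ℕ => (n : ℚ)⁻¹
  refine isUnit_lcmMatrix hpos hgcd hα fun ⟨x, hx⟩ => ?_
  have hM := maxProperDivisors_subset (S := S) (x := x)
  rw [eq_sum_powerset_gcdWith hα hx (hpos x hx) (hM.trans inter_subset_right)
    (fun T hT => gcdWith_mem hgcd hx ((hT.trans hM).trans inter_subset_left))
    (fun k hk hkx => exists_mem_maxProperDivisors_dvd (mem_inter.2 ⟨hk, hkx⟩))]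
  have hcard' := card_maxProperDivisors_add_card_jointGcds_lt hgcd hx
  exact sum_powerset_inv_gcdWith_ne_zero (hpos x hx) (hM.trans inter_subset_right)
    isAntichain_maxProperDivisors (by omega)
end

section
/- (Hong's counterexample to the Bourque–Ligh conjecture) The set S = {1, 2, 3, 5, 36, 230, 825, 227700} of 8 distinct positive integers is gcd-closed, yet the 8 × 8 LCM matrix [S] with (i,j) entry lcm(x_i, x_j) is singular, i.e., its determinant is 0. -/
/-!
Since `lcm a b = a * (gcd a b)⁻¹ * b`, the LCM matrix of `x` factors as `D * R * D` with
`D = diagonal x` and `R` the matrix of reciprocal gcds, so it is singular as soon as `R` is.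
For Hong's set, `R` kills the sign vector `(-1, 1, 1, 1, -1, -1, -1, 1)`.
-/

/-- Hong's set `{1, 2, 3, 5, 36, 230, 825, 227700}`. -/
def hongSet : Fin 8 → ℕ := ![1, 2, 3, 5, 36, 230, 825, 227700]

open Matrix

section

variable (K : Type*) [Field K] [CharZero K] {ι : Type*} [Fintype ι] [DecidableEq ι] (x : ι → ℕ)

def lcmMatrix : Matrix ι ι K := of fun i j => (Nat.lcm (x i) (x j) : K)

def reciprocalGcdMatrix : Matrix ι ι K := of fun i j => (Nat.gcd (x i) (x j) : K)⁻¹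

variable {K} in
theorem Nat.cast_lcm_eq_mul_inv_gcd_mul (a b : ℕ) :
    (Nat.lcm a b : K) = a * (Nat.gcd a b : K)⁻¹ * b := by
  rcases Nat.eq_zero_or_pos (Nat.gcd a b) with h | h
  · obtain ⟨rfl, rfl⟩ := Nat.gcd_eq_zero_iff.mp h
    simp
  · have hg : (Nat.gcd a b : K) ≠ 0 := by exact_mod_cast h.ne'
    rw [mul_right_comm, eq_mul_inv_iff_mul_eq₀ hg, ← Nat.cast_mul, ← Nat.cast_mul, mul_comm,
      Nat.gcd_mul_lcm]

theorem lcmMatrix_eq_diagonal_mul_reciprocalGcdMatrix_mul_diagonal :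
    lcmMatrix K x =
      diagonal (fun i => (x i : K)) * reciprocalGcdMatrix K x * diagonal (fun i => (x i : K)) := by
  ext i j
  simp [lcmMatrix, reciprocalGcdMatrix, Nat.cast_lcm_eq_mul_inv_gcd_mul]

theorem det_lcmMatrix :
    (lcmMatrix K x).det = (∏ i, (x i : K)) ^ 2 * (reciprocalGcdMatrix K x).det := by
  rw [lcmMatrix_eq_diagonal_mul_reciprocalGcdMatrix_mul_diagonal, det_mul, det_mul, det_diagonal]
  ring

end

theorem det_reciprocalGcdMatrix_hongSet : (reciprocalGcdMatrix ℚ hongSet).det = 0 := by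
  refine exists_mulVec_eq_zero_iff.mp ⟨![-1, 1, 1, 1, -1, -1, -1, 1], ?_, ?_⟩
  · intro h
    simpa using congrFun h 0
  · ext i
    fin_cases i <;> norm_num [reciprocalGcdMatrix, mulVec, dotProduct, Fin.sum_univ_succ, hongSet]

/-- Hong's counterexample to the Bourque–Ligh conjecture: the set
`S = {1, 2, 3, 5, 36, 230, 825, 227700}` consists of 8 distinct positive integers, is
gcd-closed, yet the 8 × 8 LCM matrix `[S]` is singular (its determinant is `0`). -/
theorem hong_counterexample :
    Function.Injective hongSet ∧ (∀ i, 0 < hongSet i) ∧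
    (∀ i j : Fin 8, ∃ k : Fin 8, hongSet k = Nat.gcd (hongSet i) (hongSet j)) ∧
    (Matrix.of fun i j : Fin 8 => (Nat.lcm (hongSet i) (hongSet j) : ℚ)).det = 0 := by
  refine ⟨by decide, by decide, by decide, ?_⟩
  change (lcmMatrix ℚ hongSet).det = 0
  rw [det_lcmMatrix, det_reciprocalGcdMatrix_hongSet, mul_zero]
end
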